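/- arXiv:1903.02676 — 5 statements merged into one kernel-verified Lean document; each statement's English description precedes it below -/
import Mathlib

section
/- Let D be an n×n Hermitian matrix partitioned as D = [[a, q^H],[q, P]] with a ∈ ℝ, q ∈ ℂ^{n−1} nonzero, and P Hermitian of size (n−1)×(n−1). Define L(ϑ) = λ₁(P + ϑ q q^H) for ϑ > 0. Then there is a unique ϑ_* > 0 solving L(ϑ) = 1/ϑ + a, and λ₁(D) = L(ϑ_*). -/
open Matrix

noncomputable section

/-- The largest real eigenvalue of a complex matrix (for a Hermitian matrix this is `λ₁`). -/
def lambdaMax {ι : Type*} [Fintype ι] (M : Matrix ι ι ℂ) : ℝ :=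
  sSup {r : ℝ | ∃ v : ι → ℂ, v ≠ 0 ∧ M *ᵥ v = (r : ℂ) • v}

namespace Stmt4Aux

open Complex

lemma ofReal_RC (r : ℝ) : (RCLike.ofReal r : ℂ) = Complex.ofReal r := rfl

variable {n : Type*} [Fintype n] [DecidableEq n] {M : Matrix n n ℂ}

def ES (M : Matrix n n ℂ) : Set ℝ := {r : ℝ | ∃ v : n → ℂ, v ≠ 0 ∧ M *ᵥ v = (r : ℂ) • v}

lemma lambdaMax_def (M : Matrix n n ℂ) : lambdaMax M = sSup (ES M) := rfl

lemma range_subset_ES (hM : M.IsHermitian) : Set.range hM.eigenvalues ⊆ ES M := by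
  rintro r ⟨i, rfl⟩
  set U : Matrix n n ℂ := (hM.eigenvectorUnitary : Matrix n n ℂ)
  have hUU : star U * U = 1 := mem_unitaryGroup_iff'.mp hM.eigenvectorUnitary.2
  refine ⟨U *ᵥ Pi.single i 1, ?_, ?_⟩
  · intro h
    have : (Pi.single i 1 : n → ℂ) = 0 := by
      calc (Pi.single i 1 : n → ℂ) = (star U * U) *ᵥ Pi.single i 1 := by rw [hUU, one_mulVec]
      _ = star U *ᵥ (U *ᵥ Pi.single i 1) := by rw [mulVec_mulVec]
      _ = 0 := by rw [h, mulVec_zero]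
    simpa using congrFun this i
  · have h1 : U *ᵥ Pi.single i 1 = ⇑(hM.eigenvectorBasis i) :=
      hM.eigenvectorUnitary_mulVec i
    rw [h1, hM.mulVec_eigenvectorBasis]
    ext j
    simp [Pi.smul_apply, Complex.real_smul]

lemma ES_subset_range (hM : M.IsHermitian) : ES M ⊆ Set.range hM.eigenvalues := by
  rintro r ⟨v, hv, hMv⟩
  set U : Matrix n n ℂ := (hM.eigenvectorUnitary : Matrix n n ℂ) with hUdef
  have hUU : star U * U = 1 := mem_unitaryGroup_iff'.mp hM.eigenvectorUnitary.2
  have hUU' : U * star U = 1 := mem_unitaryGroup_iff.mp hM.eigenvectorUnitary.2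
  set w : n → ℂ := star U *ᵥ v with hw
  have hwv : U *ᵥ w = v := by rw [hw, mulVec_mulVec, hUU', one_mulVec]
  have hw0 : w ≠ 0 := by
    intro h; apply hv; rw [← hwv, h, mulVec_zero]
  have hdiag : diagonal ((RCLike.ofReal : ℝ → ℂ) ∘ hM.eigenvalues) *ᵥ w = (r : ℂ) • w := by
    have h2 : star U *ᵥ (M *ᵥ v) = star U *ᵥ ((r : ℂ) • v) := by rw [hMv]
    rw [mulVec_smul] at h2
    calc diagonal ((RCLike.ofReal : ℝ → ℂ) ∘ hM.eigenvalues) *ᵥ w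
        = (diagonal ((RCLike.ofReal : ℝ → ℂ) ∘ hM.eigenvalues) * (star U)) *ᵥ v := by
          rw [← mulVec_mulVec]
      _ = ((star U * U) * diagonal ((RCLike.ofReal : ℝ → ℂ) ∘ hM.eigenvalues) * (star U)) *ᵥ v := by
          rw [hUU, one_mul]
      _ = (star U * M) *ᵥ v := by
          conv_rhs => rw [hM.spectral_theorem, Unitary.conjStarAlgAut_apply]
          rw [mul_assoc, mul_assoc, mul_assoc]
      _ = star U *ᵥ (M *ᵥ v) := by rw [← mulVec_mulVec]
      _ = (r : ℂ) • w := h2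
  obtain ⟨i, hi⟩ := Function.ne_iff.mp hw0
  have := congrFun hdiag i
  rw [mulVec_diagonal] at this
  simp only [Function.comp_apply, ofReal_RC, Pi.smul_apply, smul_eq_mul] at this
  have hri : (hM.eigenvalues i : ℂ) = (r : ℂ) := by
    have h4 : ((hM.eigenvalues i : ℂ) - (r : ℂ)) * w i = 0 := by
      rw [sub_mul, this, sub_self]
    rcases mul_eq_zero.mp h4 with h | h
    · linear_combination h
    · exact absurd h (by simpa using hi)
  exact ⟨i, by exact_mod_cast hri⟩

lemma ES_eq (hM : M.IsHermitian) : ES M = Set.range hM.eigenvalues :=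
  le_antisymm (ES_subset_range hM) (range_subset_ES hM)

lemma ES_finite (hM : M.IsHermitian) : (ES M).Finite := by
  rw [ES_eq hM]; exact Set.finite_range _

lemma ES_nonempty [Nonempty n] (hM : M.IsHermitian) : (ES M).Nonempty := by
  rw [ES_eq hM]; exact Set.range_nonempty _

lemma ES_bddAbove (hM : M.IsHermitian) : BddAbove (ES M) := (ES_finite hM).bddAbove

lemma lambdaMax_mem [Nonempty n] (hM : M.IsHermitian) : lambdaMax M ∈ ES M :=
  (ES_nonempty hM).csSup_mem (ES_finite hM)

lemma le_lambdaMax (hM : M.IsHermitian) {r : ℝ} (hr : r ∈ ES M) : r ≤ lambdaMax M :=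
  le_csSup (ES_bddAbove hM) hr

lemma eigenvalue_le_lambdaMax (hM : M.IsHermitian) (i : n) :
    hM.eigenvalues i ≤ lambdaMax M :=
  le_lambdaMax hM (range_subset_ES hM ⟨i, rfl⟩)

lemma dot_self_re (v : n → ℂ) : (star v ⬝ᵥ v).re = ∑ i, Complex.normSq (v i) := by
  simp only [dotProduct, Pi.star_apply, RCLike.star_def]
  rw [Complex.re_sum]
  refine Finset.sum_congr rfl fun i _ => ?_
  rw [← Complex.normSq_eq_conj_mul_self]; simp

lemma dot_self_pos {v : n → ℂ} (hv : v ≠ 0) : 0 < (star v ⬝ᵥ v).re := by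
  rw [dot_self_re]
  obtain ⟨i, hi⟩ := Function.ne_iff.mp hv
  refine Finset.sum_pos' (fun j _ => Complex.normSq_nonneg _) ⟨i, Finset.mem_univ i, ?_⟩
  simpa [Complex.normSq_pos] using hi

lemma rayleigh_le [Nonempty n] (hM : M.IsHermitian) (v : n → ℂ) :
    (star v ⬝ᵥ M *ᵥ v).re ≤ lambdaMax M * (star v ⬝ᵥ v).re := by
  set U : Matrix n n ℂ := (hM.eigenvectorUnitary : Matrix n n ℂ) with hUdef
  have hUU' : U * star U = 1 := mem_unitaryGroup_iff.mp hM.eigenvectorUnitary.2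
  set w : n → ℂ := star U *ᵥ v with hw
  have hsw : star w = star v ᵥ* U := by
    rw [hw, star_mulVec, star_eq_conjTranspose, conjTranspose_conjTranspose]
  have key : star v ⬝ᵥ M *ᵥ v = star w ⬝ᵥ (diagonal ((RCLike.ofReal : ℝ → ℂ) ∘ hM.eigenvalues) *ᵥ w) := by
    conv_lhs => rw [hM.spectral_theorem, Unitary.conjStarAlgAut_apply]
    rw [← mulVec_mulVec, ← mulVec_mulVec, dotProduct_mulVec, ← hsw, ← hw]
  have key2 : star v ⬝ᵥ v = star w ⬝ᵥ w := by
    rw [hsw, hw, ← dotProduct_mulVec, mulVec_mulVec, hUU', one_mulVec]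
  rw [key, key2]
  have hd : (star w ⬝ᵥ (diagonal ((RCLike.ofReal : ℝ → ℂ) ∘ hM.eigenvalues) *ᵥ w)).re
      = ∑ i, hM.eigenvalues i * Complex.normSq (w i) := by
    simp only [dotProduct, mulVec_diagonal, Pi.star_apply, RCLike.star_def, Function.comp_apply,
      ofReal_RC]
    rw [Complex.re_sum]
    refine Finset.sum_congr rfl fun i _ => ?_
    have h5 : (starRingEnd ℂ) (w i) * ((hM.eigenvalues i : ℂ) * w i)
        = (hM.eigenvalues i : ℂ) * (Complex.normSq (w i) : ℂ) := by
      rw [Complex.normSq_eq_conj_mul_self]; push_cast; ring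
    rw [h5, Complex.re_ofReal_mul]
    simp
  rw [hd, dot_self_re]
  rw [Finset.mul_sum]
  exact Finset.sum_le_sum fun i _ =>
    mul_le_mul_of_nonneg_right (eigenvalue_le_lambdaMax hM i) (Complex.normSq_nonneg _)

lemma eig_dot {r : ℝ} {v : n → ℂ} (hMv : M *ᵥ v = (r : ℂ) • v) :
    (star v ⬝ᵥ M *ᵥ v).re = r * (star v ⬝ᵥ v).re := by
  rw [hMv, dotProduct_smul]
  simp [smul_eq_mul, Complex.re_ofReal_mul]

lemma lambdaMax_lower [Nonempty n] (hM : M.IsHermitian) {v : n → ℂ} (hv : v ≠ 0) :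
    (star v ⬝ᵥ M *ᵥ v).re ≤ lambdaMax M * (star v ⬝ᵥ v).re := rayleigh_le hM v


lemma vecMulVec_herm (q : n → ℂ) : (vecMulVec q (star q)).IsHermitian := by
  show _ᴴ = _
  ext i j
  simp only [conjTranspose_apply, vecMulVec_apply, Pi.star_apply, RCLike.star_def,
    _root_.map_mul, Complex.conj_conj]
  ring

lemma Mth_herm {P : Matrix n n ℂ} (hP : P.IsHermitian) (q : n → ℂ) (ϑ : ℝ) :
    (P + (ϑ : ℂ) • vecMulVec q (star q)).IsHermitian := by
  refine hP.add ?_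
  show _ᴴ = _
  rw [conjTranspose_smul, vecMulVec_herm q]
  congr 1
  simp

lemma Q_mulVec (q v : n → ℂ) : vecMulVec q (star q) *ᵥ v = (star q ⬝ᵥ v) • q := by
  ext i
  simp only [mulVec, vecMulVec_apply, dotProduct, Pi.smul_apply, smul_eq_mul, Pi.star_apply,
    RCLike.star_def, Finset.mul_sum, Finset.sum_mul]
  refine Finset.sum_congr rfl fun j _ => by ring

lemma star_dot_comm (q v : n → ℂ) : star v ⬝ᵥ q = (starRingEnd ℂ) (star q ⬝ᵥ v) := by
  simp only [dotProduct, Pi.star_apply, RCLike.star_def, map_sum, _root_.map_mul,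
    Complex.conj_conj]
  refine Finset.sum_congr rfl fun j _ => by ring

lemma Q_dot (q v : n → ℂ) :
    (star v ⬝ᵥ (vecMulVec q (star q) *ᵥ v)).re = Complex.normSq (star q ⬝ᵥ v) := by
  rw [Q_mulVec, dotProduct_smul, smul_eq_mul, star_dot_comm q v, Complex.mul_conj]
  simp

lemma cauchy_schwarz (q v : n → ℂ) :
    Complex.normSq (star q ⬝ᵥ v) ≤ (∑ i, Complex.normSq (q i)) * ∑ i, Complex.normSq (v i) := by
  have h1 : ‖star q ⬝ᵥ v‖ ≤ ∑ i, ‖q i‖ * ‖v i‖ := by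
    refine le_trans (norm_sum_le Finset.univ fun i => star q i * v i) ?_
    refine le_of_eq (Finset.sum_congr rfl fun i _ => ?_)
    simp [_root_.map_mul]
  have h2 : (∑ i, ‖q i‖ * ‖v i‖) ^ 2
      ≤ (∑ i, ‖q i‖ ^ 2) * ∑ i, ‖v i‖ ^ 2 :=
    Finset.sum_mul_sq_le_sq_mul_sq _ _ _
  have h3 : Complex.normSq (star q ⬝ᵥ v) = ‖star q ⬝ᵥ v‖ ^ 2 :=
    (Complex.sq_norm _).symm
  have h4 : ‖star q ⬝ᵥ v‖ ^ 2 ≤ (∑ i, ‖q i‖ ^ 2)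
      * ∑ i, ‖v i‖ ^ 2 := by
    refine le_trans ?_ h2
    have := norm_nonneg (star q ⬝ᵥ v)
    nlinarith [Finset.sum_nonneg (fun i (_ : i ∈ Finset.univ) =>
      mul_nonneg (norm_nonneg (q i)) (norm_nonneg (v i)))]
  rw [h3]
  refine h4.trans_eq ?_
  congr 1 <;> exact Finset.sum_congr rfl fun i _ => Complex.sq_norm _


lemma Mth_dot (q : n → ℂ) (P : Matrix n n ℂ) (ϑ : ℝ) (v : n → ℂ) :
    (star v ⬝ᵥ (P + (ϑ : ℂ) • vecMulVec q (star q)) *ᵥ v).re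
      = (star v ⬝ᵥ P *ᵥ v).re + ϑ * Complex.normSq (star q ⬝ᵥ v) := by
  have h : star v ⬝ᵥ (P + (ϑ : ℂ) • vecMulVec q (star q)) *ᵥ v
      = star v ⬝ᵥ P *ᵥ v + (ϑ : ℂ) * (star v ⬝ᵥ (vecMulVec q (star q) *ᵥ v)) := by
    rw [add_mulVec, dotProduct_add, smul_mulVec, dotProduct_smul, smul_eq_mul]
  rw [h, Complex.add_re, Complex.re_ofReal_mul, Q_dot]

lemma amgm {ϑ : ℝ} (hϑ : 0 < ϑ) (z s : ℂ) :
    2 * ((starRingEnd ℂ) z * s).re * ϑ ≤ Complex.normSq z + ϑ ^ 2 * Complex.normSq s := by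
  simp only [Complex.mul_re, Complex.normSq_apply, Complex.conj_re, Complex.conj_im]
  nlinarith [sq_nonneg (z.re - ϑ * s.re), sq_nonneg (z.im - ϑ * s.im)]

section Lfacts

variable {k : ℕ} [Nonempty (Fin k)] {q : Fin k → ℂ} {P : Matrix (Fin k) (Fin k) ℂ}

lemma L_mono (hP : P.IsHermitian) {ϑ₁ ϑ₂ : ℝ} (h : ϑ₁ ≤ ϑ₂) :
    lambdaMax (P + (ϑ₁ : ℂ) • vecMulVec q (star q))
      ≤ lambdaMax (P + (ϑ₂ : ℂ) • vecMulVec q (star q)) := by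
  obtain ⟨v, hv0, hv⟩ := lambdaMax_mem (Mth_herm hP q ϑ₁)
  have hN := dot_self_pos hv0
  have h1 := eig_dot hv
  have h2 := rayleigh_le (Mth_herm hP q ϑ₂) v
  rw [Mth_dot] at h1 h2
  have h3 : lambdaMax (P + (ϑ₁ : ℂ) • vecMulVec q (star q)) * (star v ⬝ᵥ v).re
      ≤ lambdaMax (P + (ϑ₂ : ℂ) • vecMulVec q (star q)) * (star v ⬝ᵥ v).re := by
    nlinarith [Complex.normSq_nonneg (star q ⬝ᵥ v)]
  exact le_of_mul_le_mul_right h3 hN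

lemma L_lip (hP : P.IsHermitian) {ϑ₁ ϑ₂ : ℝ} (h : ϑ₁ ≤ ϑ₂) :
    lambdaMax (P + (ϑ₂ : ℂ) • vecMulVec q (star q))
      ≤ lambdaMax (P + (ϑ₁ : ℂ) • vecMulVec q (star q))
        + (ϑ₂ - ϑ₁) * ∑ i, Complex.normSq (q i) := by
  obtain ⟨v, hv0, hv⟩ := lambdaMax_mem (Mth_herm hP q ϑ₂)
  have hN := dot_self_pos hv0
  have h1 := eig_dot hv
  have h2 := rayleigh_le (Mth_herm hP q ϑ₁) v
  rw [Mth_dot] at h1 h2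
  have hcs := cauchy_schwarz q v
  rw [← dot_self_re v] at hcs
  have h3 : lambdaMax (P + (ϑ₂ : ℂ) • vecMulVec q (star q)) * (star v ⬝ᵥ v).re
      ≤ (lambdaMax (P + (ϑ₁ : ℂ) • vecMulVec q (star q))
        + (ϑ₂ - ϑ₁) * ∑ i, Complex.normSq (q i)) * (star v ⬝ᵥ v).re := by
    nlinarith [Complex.normSq_nonneg (star q ⬝ᵥ v)]
  exact le_of_mul_le_mul_right h3 hN

lemma dot_self_eq (q : Fin k → ℂ) :
    star q ⬝ᵥ q = ((∑ i, Complex.normSq (q i) : ℝ) : ℂ) := by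
  push_cast
  simp only [dotProduct, Pi.star_apply, RCLike.star_def]
  exact Finset.sum_congr rfl fun i _ => by
    rw [← Complex.normSq_eq_conj_mul_self]

lemma L_lb (hP : P.IsHermitian) (ϑ : ℝ) :
    (star q ⬝ᵥ P *ᵥ q).re + ϑ * (∑ i, Complex.normSq (q i)) ^ 2
      ≤ lambdaMax (P + (ϑ : ℂ) • vecMulVec q (star q)) * ∑ i, Complex.normSq (q i) := by
  have h2 := rayleigh_le (Mth_herm hP q ϑ) q
  rw [Mth_dot, dot_self_eq q] at h2
  simpa [← Complex.ofReal_sum, Complex.normSq_ofReal, Complex.ofReal_re, pow_two] using h2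

end Lfacts


section Block

variable {k : ℕ} {a : ℝ} {q : Fin k → ℂ} {P : Matrix (Fin k) (Fin k) ℂ}

lemma D_herm (hP : P.IsHermitian) :
    (fromBlocks (of fun _ _ => (a : ℂ)) (of fun _ j => star (q j)) (of fun i _ => q i) P
      : Matrix (Fin 1 ⊕ Fin k) (Fin 1 ⊕ Fin k) ℂ).IsHermitian := by
  show _ᴴ = _
  have hA : (of fun _ _ => (a : ℂ) : Matrix (Fin 1) (Fin 1) ℂ)ᴴ = of fun _ _ => (a : ℂ) := by
    ext i j; simp [conjTranspose_apply, Complex.conj_ofReal]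
  have hB : (of fun i _ => q i : Matrix (Fin k) (Fin 1) ℂ)ᴴ = of fun _ j => star (q j) := by
    ext i j; simp [conjTranspose_apply]
  have hC : (of fun _ j => star (q j) : Matrix (Fin 1) (Fin k) ℂ)ᴴ = of fun i _ => q i := by
    ext i j; simp [conjTranspose_apply]
  rw [fromBlocks_conjTranspose, hA, hB, hC, hP]

lemma D_mulVec (x : Fin 1 → ℂ) (v : Fin k → ℂ) :
    (fromBlocks (of fun _ _ => (a : ℂ)) (of fun _ j => star (q j)) (of fun i _ => q i) P)
        *ᵥ Sum.elim x v
      = Sum.elim (fun _ : Fin 1 => (a : ℂ) * x 0 + star q ⬝ᵥ v)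
          (fun i : Fin k => q i * x 0 + (P *ᵥ v) i) := by
  rw [fromBlocks_mulVec, Sum.elim_comp_inl, Sum.elim_comp_inr]
  funext i
  cases i with
  | inl i => simp [mulVec, dotProduct, Fin.sum_univ_one, of_apply, Pi.add_apply]
  | inr i => simp [mulVec, dotProduct, Fin.sum_univ_one, of_apply, Pi.add_apply]

lemma D_dot_re (x0 : ℂ) (v : Fin k → ℂ) :
    (star (Sum.elim (fun _ : Fin 1 => x0) v)
      ⬝ᵥ (fromBlocks (of fun _ _ => (a : ℂ)) (of fun _ j => star (q j)) (of fun i _ => q i) P)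
        *ᵥ Sum.elim (fun _ : Fin 1 => x0) v).re
    = a * Complex.normSq x0 + 2 * ((starRingEnd ℂ) x0 * (star q ⬝ᵥ v)).re
      + (star v ⬝ᵥ P *ᵥ v).re := by
  rw [D_mulVec, Function.star_sumElim, sumElim_dotProduct_sumElim]
  have e1 : star (fun _ : Fin 1 => x0) ⬝ᵥ (fun _ : Fin 1 => (a : ℂ) * x0 + star q ⬝ᵥ v)
      = (starRingEnd ℂ) x0 * ((a : ℂ) * x0) + (starRingEnd ℂ) x0 * (star q ⬝ᵥ v) := by
    simp [dotProduct, Fin.sum_univ_one, mul_add]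
  have e2 : star v ⬝ᵥ (fun i => q i * x0 + (P *ᵥ v) i)
      = x0 * (starRingEnd ℂ) (star q ⬝ᵥ v) + star v ⬝ᵥ (P *ᵥ v) := by
    have h : (fun i => q i * x0 + (P *ᵥ v) i) = x0 • q + P *ᵥ v := by
      funext i
      simp only [Pi.add_apply, Pi.smul_apply, smul_eq_mul]
      ring
    rw [h, dotProduct_add, dotProduct_smul, smul_eq_mul, star_dot_comm]
  have e3 : (starRingEnd ℂ) x0 * ((a : ℂ) * x0) = ((a * Complex.normSq x0 : ℝ) : ℂ) := by
    rw [show (starRingEnd ℂ) x0 * ((a : ℂ) * x0) = (a : ℂ) * ((starRingEnd ℂ) x0 * x0) from by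
      ring, ← Complex.normSq_eq_conj_mul_self]
    push_cast
    ring
  have e4 : (starRingEnd ℂ) x0 * (star q ⬝ᵥ v) + x0 * (starRingEnd ℂ) (star q ⬝ᵥ v)
      = ((2 * ((starRingEnd ℂ) x0 * (star q ⬝ᵥ v)).re : ℝ) : ℂ) := by
    have h : x0 * (starRingEnd ℂ) (star q ⬝ᵥ v)
        = (starRingEnd ℂ) ((starRingEnd ℂ) x0 * (star q ⬝ᵥ v)) := by
      rw [_root_.map_mul, Complex.conj_conj]
    rw [h, Complex.add_conj]
  have etotal : (starRingEnd ℂ) x0 * ((a : ℂ) * x0) + (starRingEnd ℂ) x0 * (star q ⬝ᵥ v)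
        + (x0 * (starRingEnd ℂ) (star q ⬝ᵥ v) + star v ⬝ᵥ (P *ᵥ v))
      = ((a * Complex.normSq x0 : ℝ) : ℂ)
        + ((2 * ((starRingEnd ℂ) x0 * (star q ⬝ᵥ v)).re : ℝ) : ℂ) + star v ⬝ᵥ (P *ᵥ v) := by
    linear_combination e3 + e4
  rw [e1, e2, etotal]
  simp [Complex.add_re, Complex.ofReal_re]

lemma dot_self_sum_elim (x0 : ℂ) (v : Fin k → ℂ) :
    (star (Sum.elim (fun _ : Fin 1 => x0) v) ⬝ᵥ Sum.elim (fun _ : Fin 1 => x0) v).re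
      = Complex.normSq x0 + (star v ⬝ᵥ v).re := by
  rw [Function.star_sumElim, sumElim_dotProduct_sumElim]
  have e1 : star (fun _ : Fin 1 => x0) ⬝ᵥ (fun _ : Fin 1 => x0)
      = ((Complex.normSq x0 : ℝ) : ℂ) := by
    simp [dotProduct, Fin.sum_univ_one, ← Complex.normSq_eq_conj_mul_self]
  rw [e1]
  simp [Complex.add_re, Complex.ofReal_re]

lemma D_eig {ϑ Lv : ℝ} (hϑ : 0 < ϑ) {v : Fin k → ℂ}
    (hv : (P + (ϑ : ℂ) • vecMulVec q (star q)) *ᵥ v = (Lv : ℂ) • v)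
    (hLθ : Lv = 1 / ϑ + a) :
    (fromBlocks (of fun _ _ => (a : ℂ)) (of fun _ j => star (q j)) (of fun i _ => q i) P)
        *ᵥ Sum.elim (fun _ : Fin 1 => (ϑ : ℂ) * (star q ⬝ᵥ v)) v
      = (Lv : ℂ) • Sum.elim (fun _ : Fin 1 => (ϑ : ℂ) * (star q ⬝ᵥ v)) v := by
  rw [add_mulVec, smul_mulVec, Q_mulVec] at hv
  have hϑ0 : (ϑ : ℂ) ≠ 0 := by exact_mod_cast ne_of_gt hϑ
  have hLc : (Lv : ℂ) = 1 / (ϑ : ℂ) + (a : ℂ) := by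
    rw [hLθ]; push_cast; ring
  rw [D_mulVec]
  funext i
  cases i with
  | inl i =>
    simp only [Sum.elim_inl, Pi.smul_apply, smul_eq_mul]
    rw [hLc]
    field_simp
    ring
  | inr i =>
    simp only [Sum.elim_inr, Pi.smul_apply, smul_eq_mul]
    have := congrFun hv i
    simp only [Pi.add_apply, Pi.smul_apply, smul_eq_mul] at this
    linear_combination this

end Block

end Stmt4Aux


/-- For a Hermitian matrix `D = [[a, qᴴ],[q, P]]` with `q ≠ 0`, the function
`L(ϑ) = λ₁(P + ϑ q qᴴ)` satisfies: there is a unique `ϑ⋆ > 0` with `L(ϑ⋆) = 1/ϑ⋆ + a`, and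
`λ₁(D) = L(ϑ⋆)`. -/
theorem stmt4 (k : ℕ) (a : ℝ) (q : Fin k → ℂ) (hq : q ≠ 0)
    (P : Matrix (Fin k) (Fin k) ℂ) (hP : P.IsHermitian)
    (D : Matrix (Fin 1 ⊕ Fin k) (Fin 1 ⊕ Fin k) ℂ)
    (hD : D = Matrix.fromBlocks (Matrix.of fun _ _ => (a : ℂ))
      (Matrix.of fun _ j => star (q j)) (Matrix.of fun i _ => q i) P)
    (L : ℝ → ℝ)
    (hL : ∀ ϑ : ℝ, L ϑ = lambdaMax (P + (ϑ : ℂ) • Matrix.vecMulVec q (star q))) :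
    (∃! ϑ : ℝ, 0 < ϑ ∧ L ϑ = 1 / ϑ + a) ∧
      ∀ ϑ : ℝ, 0 < ϑ → L ϑ = 1 / ϑ + a → lambdaMax D = L ϑ := by
  classical
  haveI hk : Nonempty (Fin k) := by
    by_contra h
    exact hq (funext fun i => absurd ⟨i⟩ h)
  set Kq : ℝ := ∑ i, Complex.normSq (q i) with hKq
  have hKqpos : 0 < Kq := by
    rw [hKq, ← Stmt4Aux.dot_self_re]
    exact Stmt4Aux.dot_self_pos hq
  -- monotonicity of L
  have hmono : ∀ {x y : ℝ}, x ≤ y → L x ≤ L y := by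
    intro x y h
    rw [hL x, hL y]
    exact Stmt4Aux.L_mono hP h
  have hlip' : ∀ {x y : ℝ}, x ≤ y → L y ≤ L x + (y - x) * Kq := by
    intro x y h
    rw [hL x, hL y]
    exact Stmt4Aux.L_lip hP h
  have hcont : Continuous L := by
    have : LipschitzWith (Real.toNNReal Kq) L := by
      apply LipschitzWith.of_dist_le_mul
      intro x y
      rw [Real.dist_eq, Real.dist_eq, Real.coe_toNNReal _ hKqpos.le]
      rcases le_total x y with h | h
      · have m1 := hmono h
        have m2 := hlip' h
        have hxy : |x - y| = y - x := by
          rw [abs_sub_comm]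
          exact abs_of_nonneg (by linarith)
        rw [hxy]
        rw [abs_le]
        constructor <;> nlinarith
      · have m1 := hmono h
        have m2 := hlip' h
        have hxy : |x - y| = x - y := abs_of_nonneg (by linarith)
        rw [hxy]
        rw [abs_le]
        constructor <;> nlinarith
    exact this.continuous
  set c0 : ℝ := (star q ⬝ᵥ P *ᵥ q).re with hc0
  have hlb : ∀ ϑ : ℝ, c0 + ϑ * Kq ^ 2 ≤ L ϑ * Kq := by
    intro ϑ
    rw [hL ϑ]
    exact Stmt4Aux.L_lb hP ϑ
  -- uniqueness part
  have huniq : ∀ ϑ₁ ϑ₂ : ℝ, (0 < ϑ₁ ∧ L ϑ₁ = 1 / ϑ₁ + a) → (0 < ϑ₂ ∧ L ϑ₂ = 1 / ϑ₂ + a)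
      → ϑ₁ = ϑ₂ := by
    intro ϑ₁ ϑ₂ ⟨h1p, h1e⟩ ⟨h2p, h2e⟩
    rcases lt_trichotomy ϑ₁ ϑ₂ with h | h | h
    · exfalso
      have := hmono h.le
      have hd := one_div_lt_one_div_of_lt h1p h
      rw [h1e, h2e] at this
      linarith
    · exact h
    · exfalso
      have := hmono h.le
      have hd := one_div_lt_one_div_of_lt h2p h
      rw [h1e, h2e] at this
      linarith
  -- existence
  have hexists : ∃ ϑ : ℝ, 0 < ϑ ∧ L ϑ = 1 / ϑ + a := by
    set B : ℝ := max 1 (L 1 - a) with hB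
    have hB1 : (1 : ℝ) ≤ B := le_max_left _ _
    set ε : ℝ := 1 / (B + 1) with hε
    have hεpos : 0 < ε := by positivity
    have hε1 : ε ≤ 1 := by
      rw [hε, div_le_one (by linarith)]
      linarith
    set T : ℝ := max 1 ((1 + a - c0 / Kq) / Kq) with hT
    have hT1 : (1 : ℝ) ≤ T := le_max_left _ _
    have hεT : ε ≤ T := hε1.trans hT1
    have hgε : L ε - 1 / ε - a ≤ 0 := by
      have h1 : L ε ≤ L 1 := hmono hε1
      have h2 : 1 / ε = B + 1 := by
        rw [hε, one_div_one_div]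
      have h3 : L 1 - a ≤ B := le_max_right _ _
      rw [h2]
      linarith
    have hgT : 0 ≤ L T - 1 / T - a := by
      have h1 := hlb T
      have hT2 : (1 + a - c0 / Kq) / Kq ≤ T := le_max_right _ _
      have hT2' : 1 + a - c0 / Kq ≤ T * Kq := (div_le_iff₀ hKqpos).mp hT2
      have hc : c0 / Kq * Kq = c0 := div_mul_cancel₀ _ (ne_of_gt hKqpos)
      have h1T : 1 / T ≤ 1 := by
        rw [div_le_one (by linarith)]
        exact hT1
      have key : (1 + a) * Kq ≤ L T * Kq := by nlinarith
      have : 1 + a ≤ L T := le_of_mul_le_mul_right (by linarith) hKqpos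
      linarith
    have hgcont : ContinuousOn (fun ϑ => L ϑ - 1 / ϑ - a) (Set.Icc ε T) := by
      apply ContinuousOn.sub
      · apply ContinuousOn.sub hcont.continuousOn
        apply ContinuousOn.div continuousOn_const continuousOn_id
        intro x hx
        exact ne_of_gt (lt_of_lt_of_le hεpos hx.1)
      · exact continuousOn_const
    have hIVT := intermediate_value_Icc hεT hgcont
    have h0mem : (0 : ℝ) ∈ Set.Icc (L ε - 1 / ε - a) (L T - 1 / T - a) := ⟨hgε, hgT⟩
    obtain ⟨ϑ0, hϑ0mem, hϑ0⟩ := hIVT h0mem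
    refine ⟨ϑ0, lt_of_lt_of_le hεpos hϑ0mem.1, ?_⟩
    have : L ϑ0 - 1 / ϑ0 - a = 0 := hϑ0
    linarith
  constructor
  · obtain ⟨ϑ0, hϑ0⟩ := hexists
    exact ⟨ϑ0, hϑ0, fun y hy => huniq y ϑ0 hy hϑ0⟩
  -- the main eigenvalue identity
  intro ϑ hϑ heq
  subst hD
  have hDh := Stmt4Aux.D_herm (a := a) (q := q) hP
  haveI : Nonempty (Fin 1 ⊕ Fin k) := ⟨Sum.inl (0 : Fin 1)⟩
  -- lower bound : L ϑ is an eigenvalue of D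
  have hlow : L ϑ ≤ lambdaMax ((Matrix.fromBlocks (Matrix.of fun _ _ => (a : ℂ))
      (Matrix.of fun _ j => star (q j)) (Matrix.of fun i _ => q i) P)
      : Matrix (Fin 1 ⊕ Fin k) (Fin 1 ⊕ Fin k) ℂ) := by
    obtain ⟨v, hv0, hv⟩ := Stmt4Aux.lambdaMax_mem (Stmt4Aux.Mth_herm hP q ϑ)
    rw [← hL ϑ] at hv
    have hDw := Stmt4Aux.D_eig hϑ hv heq
    refine Stmt4Aux.le_lambdaMax hDh ⟨_, ?_, hDw⟩
    intro h
    apply hv0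
    funext i
    exact congrFun h (Sum.inr i)
  -- upper bound
  have hupp : lambdaMax ((Matrix.fromBlocks (Matrix.of fun _ _ => (a : ℂ))
      (Matrix.of fun _ j => star (q j)) (Matrix.of fun i _ => q i) P)
      : Matrix (Fin 1 ⊕ Fin k) (Fin 1 ⊕ Fin k) ℂ) ≤ L ϑ := by
    obtain ⟨w, hw0, hw⟩ := Stmt4Aux.lambdaMax_mem hDh
    set lD := lambdaMax ((Matrix.fromBlocks (Matrix.of fun _ _ => (a : ℂ))
      (Matrix.of fun _ j => star (q j)) (Matrix.of fun i _ => q i) P)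
      : Matrix (Fin 1 ⊕ Fin k) (Fin 1 ⊕ Fin k) ℂ) with hlD
    set x0 : ℂ := w (Sum.inl 0) with hx0
    set v : Fin k → ℂ := w ∘ Sum.inr with hv
    have hwelim : w = Sum.elim (fun _ : Fin 1 => x0) v := by
      funext i
      cases i with
      | inl i =>
        have : i = 0 := Subsingleton.elim i 0
        rw [this]
        rfl
      | inr i => rfl
    have h1 := Stmt4Aux.eig_dot hw
    have h2 : (star w ⬝ᵥ ((Matrix.fromBlocks (Matrix.of fun _ _ => (a : ℂ))
        (Matrix.of fun _ j => star (q j)) (Matrix.of fun i _ => q i) P)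
        : Matrix (Fin 1 ⊕ Fin k) (Fin 1 ⊕ Fin k) ℂ) *ᵥ w).re
        = a * Complex.normSq x0 + 2 * ((starRingEnd ℂ) x0 * (star q ⬝ᵥ v)).re
          + (star v ⬝ᵥ P *ᵥ v).re := by
      rw [hwelim]
      exact Stmt4Aux.D_dot_re x0 v
    have hN : (star w ⬝ᵥ w).re = Complex.normSq x0 + (star v ⬝ᵥ v).re := by
      rw [hwelim]
      exact Stmt4Aux.dot_self_sum_elim x0 v
    have hNpos : 0 < (star w ⬝ᵥ w).re := Stmt4Aux.dot_self_pos hw0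
    have hamgm := Stmt4Aux.amgm hϑ x0 (star q ⬝ᵥ v)
    have hray : (star v ⬝ᵥ P *ᵥ v).re + ϑ * Complex.normSq (star q ⬝ᵥ v)
        ≤ L ϑ * (star v ⬝ᵥ v).re := by
      have h := Stmt4Aux.rayleigh_le (Stmt4Aux.Mth_herm hP q ϑ) v
      rw [Stmt4Aux.Mth_dot] at h
      rw [hL ϑ]
      exact h
    have hLϑ2 : L ϑ * ϑ = 1 + a * ϑ := by
      rw [heq]
      field_simp
    have hNv : 0 ≤ (star v ⬝ᵥ v).re := by
      rw [Stmt4Aux.dot_self_re]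
      exact Finset.sum_nonneg fun i _ => Complex.normSq_nonneg _
    have h12 : lD * (star w ⬝ᵥ w).re = a * Complex.normSq x0
        + 2 * ((starRingEnd ℂ) x0 * (star q ⬝ᵥ v)).re + (star v ⬝ᵥ P *ᵥ v).re := by
      rw [← h1, h2]
    have hLx : L ϑ * ϑ * Complex.normSq x0 = (1 + a * ϑ) * Complex.normSq x0 := by
      rw [hLϑ2]
    have hrayϑ : ϑ * ((star v ⬝ᵥ P *ᵥ v).re + ϑ * Complex.normSq (star q ⬝ᵥ v))
        ≤ ϑ * (L ϑ * (star v ⬝ᵥ v).re) := mul_le_mul_of_nonneg_left hray hϑ.le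
    have hstepA : lD * ((star w ⬝ᵥ w).re * ϑ)
        = (a * Complex.normSq x0 + 2 * ((starRingEnd ℂ) x0 * (star q ⬝ᵥ v)).re
          + (star v ⬝ᵥ P *ᵥ v).re) * ϑ := by
      rw [← mul_assoc, h12]
    have hfinal : lD * ((star w ⬝ᵥ w).re * ϑ) ≤ L ϑ * ((star w ⬝ᵥ w).re * ϑ) := by
      rw [hstepA, hN]
      nlinarith [hamgm, hLx, hrayϑ, Complex.normSq_nonneg x0,
        Complex.normSq_nonneg (star q ⬝ᵥ v)]
    exact le_of_mul_le_mul_right hfinal (mul_pos hNpos hϑ)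
  exact le_antisymm hupp hlow

end
end

section
/- Let D be an n×n Hermitian matrix partitioned as D = [[a, q^H],[q, P]] with a ∈ ℝ, q ∈ ℂ^{n−1} nonzero, and P Hermitian. Define L(ϑ) = λ₁(P + ϑ q q^H) for ϑ > 0, and let ϑ_* > 0 be the unique solution of L(ϑ) = 1/ϑ + a. Let v₁ be a unit-norm eigenvector of D for the eigenvalue λ₁(D). Then |e₁^H v₁|² ∈ [∂₋L(ϑ_*)/(∂₋L(ϑ_*) + 1/ϑ_*²), ∂₊L(ϑ_*)/(∂₊L(ϑ_*) + 1/ϑ_*²)], where ∂₋ and ∂₊ denote left and right derivatives of the convex function L. In particular, if L is differentiable at ϑ_*, then |e₁^H v₁|² = L'(ϑ_*)/(L'(ϑ_*) + 1/ϑ_*²). -/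
open Matrix

noncomputable section

namespace Aux

variable {ι : Type*} [Fintype ι] [DecidableEq ι]

lemma star_mul_self (w : ℂ) : star w * w = ((‖w‖ ^ 2 : ℝ) : ℂ) := by
  rw [← Complex.normSq_eq_norm_sq, Complex.star_def, Complex.normSq_eq_conj_mul_self]
  

lemma dot_self_eq (z : ι → ℂ) : star z ⬝ᵥ z = ((∑ i, ‖z i‖ ^ 2 : ℝ) : ℂ) := by
  push_cast
  simp only [dotProduct, Pi.star_apply]
  congr 1; ext i
  rw [star_mul_self]; push_cast; ring

lemma quad_eq {M : Matrix ι ι ℂ} (hM : M.IsHermitian) (x : ι → ℂ) :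
    star x ⬝ᵥ (M *ᵥ x) =
      ∑ i, ((hM.eigenvalues i : ℂ)) *
        ((‖(star (hM.eigenvectorUnitary : Matrix ι ι ℂ) *ᵥ x) i‖ ^ 2 : ℝ) : ℂ) := by
  set U : Matrix ι ι ℂ := (hM.eigenvectorUnitary : Matrix ι ι ℂ) with hU
  set y : ι → ℂ := star U *ᵥ x with hy
  have hstarU : star x ᵥ* U = star y := by
    rw [hy, star_mulVec]; simp [Matrix.star_eq_conjTranspose]
  have h1 : M *ᵥ x = U *ᵥ (diagonal (RCLike.ofReal ∘ hM.eigenvalues) *ᵥ y) := by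
    conv_lhs => rw [hM.spectral_theorem]
    simp [hy, ← mulVec_mulVec, hU]
  rw [h1, dotProduct_mulVec, hstarU]
  simp only [mulVec_diagonal, dotProduct, Pi.star_apply, Function.comp]
  congr 1; ext i
  rw [show star (y i) * (RCLike.ofReal (hM.eigenvalues i) * y i)
      = RCLike.ofReal (hM.eigenvalues i) * (star (y i) * y i) by ring, star_mul_self]
  norm_num

end Aux

namespace Aux2
open Aux
variable {ι : Type*} [Fintype ι] [DecidableEq ι]

lemma sum_sq_nonneg (z : ι → ℂ) : 0 ≤ ∑ i, ‖z i‖ ^ 2 :=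
  Finset.sum_nonneg fun i _ => sq_nonneg _

lemma sum_sq_pos {z : ι → ℂ} (hz : z ≠ 0) : 0 < ∑ i, ‖z i‖ ^ 2 := by
  obtain ⟨i, hi⟩ := Function.ne_iff.mp hz
  have : (0:ℝ) < ‖z i‖ ^ 2 := pow_pos (norm_pos_iff.mpr hi) 2
  exact lt_of_lt_of_le this (Finset.single_le_sum (f := fun i => ‖z i‖ ^ 2)
    (fun j _ => sq_nonneg _) (Finset.mem_univ i))

lemma norm_eq {M : Matrix ι ι ℂ} (hM : M.IsHermitian) (x : ι → ℂ) :
    ∑ i, ‖(star (hM.eigenvectorUnitary : Matrix ι ι ℂ) *ᵥ x) i‖ ^ 2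
      = ∑ i, ‖x i‖ ^ 2 := by
  set U : Matrix ι ι ℂ := (hM.eigenvectorUnitary : Matrix ι ι ℂ) with hU
  set y : ι → ℂ := star U *ᵥ x with hy
  have hstarU : star x ᵥ* U = star y := by
    rw [hy, star_mulVec]; simp [Matrix.star_eq_conjTranspose]
  have h1 : U * star U = 1 := by
    simpa [hU] using (Matrix.mem_unitaryGroup_iff.mp hM.eigenvectorUnitary.2)
  have this : star y ⬝ᵥ y = star x ⬝ᵥ x := by
    calc star y ⬝ᵥ y = (star x ᵥ* U) ⬝ᵥ (star U *ᵥ x) := by rw [hstarU, hy]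
      _ = star x ⬝ᵥ (U *ᵥ (star U *ᵥ x)) := (dotProduct_mulVec _ _ _).symm
      _ = star x ⬝ᵥ x := by rw [mulVec_mulVec, h1, one_mulVec]
  rw [dot_self_eq, dot_self_eq] at this
  exact_mod_cast this

lemma lambdaMax_eq {M : Matrix ι ι ℂ} (hM : M.IsHermitian) [Nonempty ι]
    {i₀ : ι} (hi₀ : ∀ i, hM.eigenvalues i ≤ hM.eigenvalues i₀) :
    lambdaMax M = hM.eigenvalues i₀ := by
  have hmem : hM.eigenvalues i₀ ∈ {r : ℝ | ∃ v : ι → ℂ, v ≠ 0 ∧ M *ᵥ v = (r : ℂ) • v} := by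
    refine ⟨⇑(hM.eigenvectorBasis i₀), ?_, ?_⟩
    · intro h
      exact hM.eigenvectorBasis.orthonormal.ne_zero i₀ (by ext j; exact congrFun h j)
    · rw [hM.mulVec_eigenvectorBasis]
      ext j
      simp [Complex.real_smul]
  have hbdd : ∀ r ∈ {r : ℝ | ∃ v : ι → ℂ, v ≠ 0 ∧ M *ᵥ v = (r : ℂ) • v},
      r ≤ hM.eigenvalues i₀ := by
    rintro r ⟨v, hv, hev⟩
    have h1 : star v ⬝ᵥ (M *ᵥ v) = ((r * ∑ i, ‖v i‖ ^ 2 : ℝ) : ℂ) := by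
      rw [hev, dotProduct_smul, smul_eq_mul, dot_self_eq]; push_cast; ring
    have h2 := quad_eq hM v
    set y : ι → ℂ := star (hM.eigenvectorUnitary : Matrix ι ι ℂ) *ᵥ v with hy
    have h3 : (star v ⬝ᵥ (M *ᵥ v)).re = ∑ i, hM.eigenvalues i * ‖y i‖ ^ 2 := by
      have : star v ⬝ᵥ (M *ᵥ v)
          = ((∑ i, hM.eigenvalues i * ‖y i‖ ^ 2 : ℝ) : ℂ) := by
        rw [h2]; push_cast; rfl
      rw [this, Complex.ofReal_re]
    have h4 : ∑ i, hM.eigenvalues i * ‖y i‖ ^ 2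
        ≤ hM.eigenvalues i₀ * ∑ i, ‖y i‖ ^ 2 := by
      rw [Finset.mul_sum]
      exact Finset.sum_le_sum fun i _ => mul_le_mul_of_nonneg_right (hi₀ i) (sq_nonneg _)
    have h5 : r * ∑ i, ‖v i‖ ^ 2 ≤ hM.eigenvalues i₀ * ∑ i, ‖v i‖ ^ 2 := by
      have := h3
      rw [h1] at this
      simp only [Complex.ofReal_re] at this
      rw [this]
      calc ∑ i, hM.eigenvalues i * ‖y i‖ ^ 2
          ≤ hM.eigenvalues i₀ * ∑ i, ‖y i‖ ^ 2 := h4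
        _ = hM.eigenvalues i₀ * ∑ i, ‖v i‖ ^ 2 := by rw [norm_eq hM v]
    exact le_of_mul_le_mul_right (by linarith [h5]) (sum_sq_pos hv)
  exact le_antisymm (csSup_le ⟨_, hmem⟩ hbdd) (le_csSup ⟨_, hbdd⟩ hmem)

lemma lambdaMax_exists {M : Matrix ι ι ℂ} (hM : M.IsHermitian) [Nonempty ι] :
    ∃ u : ι → ℂ, u ≠ 0 ∧ M *ᵥ u = ((lambdaMax M : ℝ) : ℂ) • u := by
  obtain ⟨i₀, hi₀⟩ := Finite.exists_max hM.eigenvalues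
  refine ⟨⇑(hM.eigenvectorBasis i₀), ?_, ?_⟩
  · intro h
    exact hM.eigenvectorBasis.orthonormal.ne_zero i₀ (by ext j; exact congrFun h j)
  · rw [hM.mulVec_eigenvectorBasis, lambdaMax_eq hM hi₀]
    ext j
    simp [Complex.real_smul]

lemma rayleigh_le {M : Matrix ι ι ℂ} (hM : M.IsHermitian) [Nonempty ι] (x : ι → ℂ) :
    (star x ⬝ᵥ (M *ᵥ x)).re ≤ lambdaMax M * ∑ i, ‖x i‖ ^ 2 := by
  obtain ⟨i₀, hi₀⟩ := Finite.exists_max hM.eigenvalues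
  rw [lambdaMax_eq hM hi₀, ← norm_eq hM x]
  set y : ι → ℂ := star (hM.eigenvectorUnitary : Matrix ι ι ℂ) *ᵥ x with hy
  have h3 : (star x ⬝ᵥ (M *ᵥ x)).re = ∑ i, hM.eigenvalues i * ‖y i‖ ^ 2 := by
    have : star x ⬝ᵥ (M *ᵥ x)
        = ((∑ i, hM.eigenvalues i * ‖y i‖ ^ 2 : ℝ) : ℂ) := by
      rw [quad_eq hM x]; push_cast; rfl
    rw [this, Complex.ofReal_re]
  rw [h3, Finset.mul_sum]
  exact Finset.sum_le_sum fun i _ => mul_le_mul_of_nonneg_right (hi₀ i) (sq_nonneg _)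

lemma div_mono_arith {c x m : ℝ} (hc : 0 < c) (hx0 : 0 ≤ x) (hxm : x ≤ m) :
    x / (x + c) ≤ m / (m + c) := by
  rw [div_le_div_iff₀ (by linarith) (by linarith)]
  nlinarith

end Aux2


open Aux Aux2

/-- For a Hermitian `D = [[a, qᴴ],[q, P]]` with `q ≠ 0`, `L(ϑ) = λ₁(P + ϑqqᴴ)`,
`ϑ⋆ > 0` the unique solution of `L(ϑ) = 1/ϑ + a`, and `v₁` a unit eigenvector of `D` for
`λ₁(D)`, the overlap `|e₁ᴴ v₁|²` lies between `∂₋L(ϑ⋆)/(∂₋L(ϑ⋆)+1/ϑ⋆²)` and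
`∂₊L(ϑ⋆)/(∂₊L(ϑ⋆)+1/ϑ⋆²)`; if `L` is differentiable at `ϑ⋆`, it equals
`L'(ϑ⋆)/(L'(ϑ⋆)+1/ϑ⋆²)`. -/
theorem stmt5 (k : ℕ) (a : ℝ) (q : Fin k → ℂ) (hq : q ≠ 0)
    (P : Matrix (Fin k) (Fin k) ℂ) (hP : P.IsHermitian)
    (D : Matrix (Fin 1 ⊕ Fin k) (Fin 1 ⊕ Fin k) ℂ)
    (hD : D = Matrix.fromBlocks (Matrix.of fun _ _ => (a : ℂ))
      (Matrix.of fun _ j => star (q j)) (Matrix.of fun i _ => q i) P)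
    (L : ℝ → ℝ)
    (hL : ∀ ϑ : ℝ, L ϑ = lambdaMax (P + (ϑ : ℂ) • Matrix.vecMulVec q (star q)))
    (ϑs : ℝ) (hϑpos : 0 < ϑs) (hϑeq : L ϑs = 1 / ϑs + a)
    (v : Fin 1 ⊕ Fin k → ℂ) (hvnorm : ∑ i, ‖v i‖ ^ 2 = 1)
    (hvec : D *ᵥ v = ((lambdaMax D : ℝ) : ℂ) • v)
    (dL dR : ℝ)
    (hdL : HasDerivWithinAt L dL (Set.Iio ϑs) ϑs)
    (hdR : HasDerivWithinAt L dR (Set.Ioi ϑs) ϑs) :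
    ‖v (Sum.inl 0)‖ ^ 2 ∈
        Set.Icc (dL / (dL + 1 / ϑs ^ 2)) (dR / (dR + 1 / ϑs ^ 2)) ∧
      ∀ d : ℝ, HasDerivAt L d ϑs →
        ‖v (Sum.inl 0)‖ ^ 2 = d / (d + 1 / ϑs ^ 2) := by
  obtain ⟨j₀, hqj₀⟩ : ∃ j, q j ≠ 0 := Function.ne_iff.mp hq
  haveI : Nonempty (Fin k) := ⟨j₀⟩
  set lam : ℝ := lambdaMax D with hlamdef
  set v₀ : ℂ := v (Sum.inl 0) with hv₀def
  set w : Fin k → ℂ := fun j => v (Sum.inr j) with hwdef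
  set β : ℝ := ‖v₀‖ ^ 2 with hβdef
  -- row equations
  have hrow1 : (a : ℂ) * v₀ + (∑ j, star (q j) * w j) = ((lam : ℝ) : ℂ) * v₀ := by
    have h1 := congrFun hvec (Sum.inl 0)
    simpa [hD, Matrix.mulVec, dotProduct, Fintype.sum_sum_type] using h1
  have hrow2 : ∀ i, q i * v₀ + (P *ᵥ w) i = ((lam : ℝ) : ℂ) * w i := by
    intro i
    have h1 := congrFun hvec (Sum.inr i)
    simpa [hD, Matrix.mulVec, dotProduct, Fintype.sum_sum_type] using h1
  -- norm split
  have hsplit : β + ∑ j, ‖w j‖ ^ 2 = 1 := by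
    rw [← hvnorm, Fintype.sum_sum_type]
    simp [hβdef, hwdef, hv₀def]
  have hwnonneg : (0:ℝ) ≤ ∑ j, ‖w j‖ ^ 2 := sum_sq_nonneg w
  have hβnonneg : (0:ℝ) ≤ β := sq_nonneg _
  -- Hermitian matrices
  have hqq : (Matrix.vecMulVec q (star q)).IsHermitian := by
    ext i j
    simp [Matrix.conjTranspose_apply, Matrix.vecMulVec_apply, mul_comm]
  have hMH : ∀ ϑ : ℝ, (P + (ϑ : ℂ) • Matrix.vecMulVec q (star q)).IsHermitian := by
    intro ϑ
    refine hP.add ?_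
    unfold Matrix.IsHermitian
    rw [Matrix.conjTranspose_smul, hqq]
    congr 1
    simp [Complex.star_def, Complex.conj_ofReal]
  have hDH : D.IsHermitian := by
    rw [hD]
    unfold Matrix.IsHermitian
    rw [Matrix.fromBlocks_conjTranspose]
    ext (i | i) (j | j) <;>
      simp [Matrix.conjTranspose_apply, Complex.star_def, Complex.conj_ofReal, hP.apply]
  -- β < 1
  have hβle : β ≤ 1 := by nlinarith [hsplit, hwnonneg]
  have hβlt : β < 1 := by
    rcases lt_or_eq_of_le hβle with h | h
    · exact h
    · exfalso
      have hwsum : ∑ j, ‖w j‖ ^ 2 = 0 := by linarith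
      have hwz : ∀ j, w j = 0 := by
        intro j
        have := (Finset.sum_eq_zero_iff_of_nonneg
          (fun i _ => sq_nonneg (‖w i‖))).mp hwsum j (Finset.mem_univ j)
        simpa using this
      have h2 := hrow2 j₀
      have hPw : P *ᵥ w = 0 := by
        have : w = 0 := funext hwz
        rw [this, Matrix.mulVec_zero]
      rw [hPw, hwz j₀] at h2
      simp only [Pi.zero_apply, add_zero, mul_zero] at h2
      have hv₀ne : v₀ ≠ 0 := by
        intro hz
        rw [hβdef, hz] at h
        simp at h
      exact hqj₀ (by
        rcases mul_eq_zero.mp h2 with h' | h'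
        · exact h'
        · exact absurd h' hv₀ne)
  have h1β : (0:ℝ) < 1 - β := by linarith
  -- s
  set s : ℂ := ∑ j, star (q j) * w j with hsdef
  have hs : s = (((lam - a : ℝ)) : ℂ) * v₀ := by
    push_cast
    rw [hsdef]
    linear_combination hrow1
  have hwsum' : ∑ j, ‖w j‖ ^ 2 = 1 - β := by linarith
  -- quadratic form identity
  have hNw : Matrix.vecMulVec q (star q) *ᵥ w = s • q := by
    ext i
    simp only [Matrix.mulVec, Matrix.vecMulVec_apply, dotProduct, Pi.smul_apply,
      Pi.star_apply, smul_eq_mul, hsdef, Finset.mul_sum]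
    rw [Finset.sum_mul]
    refine Finset.sum_congr rfl fun j _ => ?_
    ring
  have hPw : P *ᵥ w = ((lam : ℝ) : ℂ) • w - v₀ • q := by
    ext i
    have := hrow2 i
    simp only [Pi.sub_apply, Pi.smul_apply, smul_eq_mul]
    linear_combination this
  have hswq : star w ⬝ᵥ q = star s := by
    rw [hsdef, star_sum]
    simp only [dotProduct, Pi.star_apply, StarMul.star_mul, star_star]
  have hquad : ∀ ϑ : ℝ, star w ⬝ᵥ ((P + (ϑ : ℂ) • Matrix.vecMulVec q (star q)) *ᵥ w)
      = ((lam * (1 - β) + (lam - a) * (ϑ * (lam - a) - 1) * β : ℝ) : ℂ) := by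
    intro ϑ
    rw [Matrix.add_mulVec, Matrix.smul_mulVec, hNw, hPw]
    simp only [dotProduct_add, dotProduct_sub, dotProduct_smul, smul_eq_mul]
    rw [dot_self_eq, hswq, hwsum', hs]
    have hv₀sq : v₀ * star v₀ = ((β : ℝ) : ℂ) := by
      rw [hβdef, Complex.star_def, Complex.mul_conj]
      norm_cast
      rw [Complex.sq_norm]
    have hstars : star ((((lam - a : ℝ)) : ℂ) * v₀) = (((lam - a : ℝ)) : ℂ) * star v₀ := by
      rw [star_mul']
      congr 1
      rw [Complex.star_def, Complex.conj_ofReal]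
    rw [hstars]
    push_cast
    push_cast at hv₀sq
    linear_combination ((ϑ:ℂ) * ((lam:ℂ) - a) * ((lam:ℂ) - a) - ((lam:ℂ)-a)) * hv₀sq
  -- key inequality (**)
  have key : ∀ ϑ : ℝ,
      lam * (1 - β) + (lam - a) * (ϑ * (lam - a) - 1) * β ≤ L ϑ * (1 - β) := by
    intro ϑ
    have hb := rayleigh_le (hMH ϑ) w
    rw [hquad ϑ, Complex.ofReal_re, ← hL ϑ, hwsum'] at hb
    exact hb
  -- general helpers for eigenvectors
  have hNv : ∀ z : Fin k → ℂ,
      Matrix.vecMulVec q (star q) *ᵥ z = (∑ j, star (q j) * z j) • q := by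
    intro z
    ext i
    simp only [Matrix.mulVec, Matrix.vecMulVec_apply, dotProduct, Pi.smul_apply,
      Pi.star_apply, smul_eq_mul, Finset.mul_sum]
    rw [Finset.sum_mul]
    refine Finset.sum_congr rfl fun j _ => ?_
    ring
  have hsq : ∀ z : Fin k → ℂ, star z ⬝ᵥ q = star (∑ j, star (q j) * z j) := by
    intro z
    rw [star_sum]
    simp only [dotProduct, Pi.star_apply, StarMul.star_mul, star_star]
  -- quadratic form of an eigenvector of M ϑ₁ against M ϑ₂
  have hquadgen : ∀ (ϑ₁ ϑ₂ : ℝ) (z : Fin k → ℂ),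
      (P + (ϑ₁:ℂ) • Matrix.vecMulVec q (star q)) *ᵥ z
        = ((lambdaMax (P + (ϑ₁:ℂ) • Matrix.vecMulVec q (star q)) : ℝ) : ℂ) • z →
      star z ⬝ᵥ ((P + (ϑ₂:ℂ) • Matrix.vecMulVec q (star q)) *ᵥ z)
        = ((L ϑ₁ * (∑ i, ‖z i‖ ^ 2)
            + (ϑ₂ - ϑ₁) * ‖∑ j, star (q j) * z j‖ ^ 2 : ℝ) : ℂ) := by
    intro ϑ₁ ϑ₂ z hz
    have hM2 : (P + (ϑ₂:ℂ) • Matrix.vecMulVec q (star q))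
        = (P + (ϑ₁:ℂ) • Matrix.vecMulVec q (star q))
          + (((ϑ₂ - ϑ₁ : ℝ)):ℂ) • Matrix.vecMulVec q (star q) := by
      push_cast
      rw [add_assoc, ← add_smul]
      ring_nf
    rw [hM2, Matrix.add_mulVec, dotProduct_add, hz, dotProduct_smul,
      Matrix.smul_mulVec, dotProduct_smul, hNv z, dotProduct_smul, hsq z,
      dot_self_eq]
    simp only [smul_eq_mul]
    rw [show (∑ j, star (q j) * z j) * star (∑ j, star (q j) * z j)
        = ((‖∑ j, star (q j) * z j‖ ^ 2 : ℝ) : ℂ) by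
      rw [mul_comm]; exact star_mul_self _]
    rw [← hL ϑ₁]
    push_cast
    ring
  -- monotonicity of L
  have hmono : ∀ ϑ₁ ϑ₂ : ℝ, ϑ₁ ≤ ϑ₂ → L ϑ₁ ≤ L ϑ₂ := by
    intro ϑ₁ ϑ₂ hle
    obtain ⟨z, hz0, hzev⟩ := lambdaMax_exists (hMH ϑ₁)
    have hNz : (0:ℝ) < ∑ i, ‖z i‖ ^ 2 := sum_sq_pos hz0
    have hray := rayleigh_le (hMH ϑ₂) z
    rw [hquadgen ϑ₁ ϑ₂ z hzev, Complex.ofReal_re, ← hL ϑ₂] at hray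
    nlinarith [sq_nonneg (‖∑ j, star (q j) * z j‖)]
  -- lower bound : L ϑs ≤ lam
  have hge : L ϑs ≤ lam := by
    obtain ⟨u, hu0, huev⟩ := lambdaMax_exists (hMH ϑs)
    have hNupos : (0:ℝ) < ∑ i, ‖u i‖ ^ 2 := sum_sq_pos hu0
    set g : ℂ := ∑ j, star (q j) * u j with hgdef
    set G : ℝ := ‖g‖ ^ 2 with hGdef
    set Nu : ℝ := ∑ i, ‖u i‖ ^ 2 with hNudef
    have hGnonneg : (0:ℝ) ≤ G := sq_nonneg _
    have huPu : star u ⬝ᵥ (P *ᵥ u) = ((L ϑs * Nu - ϑs * G : ℝ) : ℂ) := by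
      have h0 := hquadgen ϑs 0 u huev
      rw [show ((0:ℝ):ℂ) = (0:ℂ) by norm_num, zero_smul, add_zero] at h0
      rw [h0, show (∑ j, star (q j) * u j) = g from hgdef.symm, ← hGdef,
        show (∑ i, ‖u i‖ ^ 2) = Nu from hNudef.symm]
      push_cast
      ring
    set t : ℂ := (ϑs : ℂ) * g with htdef
    set x : Fin 1 ⊕ Fin k → ℂ := Sum.elim (fun _ => t) u with hxdef
    have hDx1 : (D *ᵥ x) (Sum.inl 0) = (a:ℂ) * t + g := by
      simp only [hD, hxdef, Matrix.mulVec, dotProduct, Fintype.sum_sum_type,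
        Fin.sum_univ_one, Matrix.fromBlocks_apply₁₁, Matrix.fromBlocks_apply₁₂,
        Matrix.of_apply, Sum.elim_inl, Sum.elim_inr, hgdef]
    have hDx2 : ∀ i, (D *ᵥ x) (Sum.inr i) = q i * t + (P *ᵥ u) i := by
      intro i
      simp only [hD, hxdef, Matrix.mulVec, dotProduct, Fintype.sum_sum_type,
        Fin.sum_univ_one, Matrix.fromBlocks_apply₂₁, Matrix.fromBlocks_apply₂₂,
        Matrix.of_apply, Sum.elim_inl, Sum.elim_inr]
    have hA : star x ⬝ᵥ (D *ᵥ x)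
        = star t * ((a:ℂ) * t + g) + (t * star g + ((L ϑs * Nu - ϑs * G : ℝ) : ℂ)) := by
      rw [← huPu]
      simp only [dotProduct, Fintype.sum_sum_type, Fin.sum_univ_one, Pi.star_apply]
      have e0 : x (Sum.inl 0) = t := rfl
      rw [e0, hDx1]
      congr 1
      have e1 : ∀ i, star (x (Sum.inr i)) * (D *ᵥ x) (Sum.inr i)
          = star (u i) * (q i * t) + star (u i) * (P *ᵥ u) i := by
        intro i
        rw [show x (Sum.inr i) = u i from rfl, hDx2 i]
        ring
      rw [Finset.sum_congr rfl fun i _ => e1 i, Finset.sum_add_distrib]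
      congr 1
      · rw [show t * star g = (star u ⬝ᵥ q) * t by rw [hsq u, ← hgdef]; ring,
          dotProduct, Finset.sum_mul]
        refine Finset.sum_congr rfl fun i _ => ?_
        simp only [Pi.star_apply]
        ring
    have hgg : g * star g = ((G:ℝ) : ℂ) := by
      rw [mul_comm]; exact star_mul_self g
    have hLs2 : ((L ϑs : ℝ) : ℂ) * (ϑs : ℂ) = 1 + (a:ℂ) * (ϑs:ℂ) := by
      have : L ϑs * ϑs = 1 + a * ϑs := by
        rw [hϑeq]; field_simp
      exact_mod_cast congrArg Complex.ofReal this
    have hAval : star x ⬝ᵥ (D *ᵥ x) = ((L ϑs * (Nu + ϑs^2 * G) : ℝ) : ℂ) := by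
      rw [hA, htdef]
      have hstart : star ((ϑs:ℂ) * g) = (ϑs:ℂ) * star g := by
        rw [star_mul']
        congr 1
        rw [Complex.star_def, Complex.conj_ofReal]
      rw [hstart]
      push_cast
      linear_combination ((a:ℂ) * (ϑs:ℂ)^2 + 2*(ϑs:ℂ)) * hgg - ((G:ℝ):ℂ) * (ϑs:ℂ) * hLs2
    have hxnorm : ∑ i, ‖x i‖ ^ 2 = ϑs^2 * G + Nu := by
      rw [Fintype.sum_sum_type, Fin.sum_univ_one]
      have : ‖x (Sum.inl 0)‖ ^ 2 = ϑs^2 * G := by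
        rw [show x (Sum.inl 0) = t from rfl, htdef, norm_mul, Complex.norm_real, Real.norm_eq_abs,
          abs_of_pos hϑpos, mul_pow, hGdef]
      rw [this, hNudef]
      congr 1
    have hray := rayleigh_le hDH x
    rw [hAval, Complex.ofReal_re, hxnorm, ← hlamdef] at hray
    nlinarith [hray, hNupos, hGnonneg, mul_nonneg (sq_nonneg ϑs) hGnonneg]
  -- lam = L ϑs = 1/ϑs + a
  have hlamge : 1 / ϑs + a ≤ lam := by rw [← hϑeq]; exact hge
  have hlamma : 1 / ϑs ≤ lam - a := by linarith
  have hϑne : ϑs ≠ 0 := ne_of_gt hϑpos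
  have hlamle : lam ≤ L ϑs := by
    have hk := key ϑs
    have hterm : 0 ≤ (lam - a) * (ϑs * (lam - a) - 1) * β := by
      apply mul_nonneg (mul_nonneg ?_ ?_) hβnonneg
      · have : (0:ℝ) < 1/ϑs := by positivity
        linarith
      · have h1 : 1 ≤ ϑs * (1/ϑs) := by rw [mul_one_div_cancel hϑne]
        have h2 : ϑs * (1/ϑs) ≤ ϑs * (lam - a) :=
          mul_le_mul_of_nonneg_left hlamma (le_of_lt hϑpos)
        linarith
    nlinarith [hk, hterm, h1β]
  have hlameq : lam = L ϑs := le_antisymm hlamle hge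
  have hlama : lam - a = 1/ϑs := by rw [hlameq, hϑeq]; ring
  -- linear lower bound on L
  set m : ℝ := β / ((1 - β) * ϑs^2) with hmdef
  have hm0 : 0 ≤ m := div_nonneg hβnonneg (by positivity)
  have hmβ : m * ((1 - β) * ϑs^2) = β := by
    rw [hmdef]; field_simp
  have hlower : ∀ ϑ : ℝ, L ϑs + m * (ϑ - ϑs) ≤ L ϑ := by
    intro ϑ
    have hk := key ϑ
    rw [hlama, hlameq] at hk
    have e : (1/ϑs) * (ϑ * (1/ϑs) - 1) * β = β * (ϑ - ϑs) / ϑs^2 := by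
      field_simp
    rw [e] at hk
    have h3 : m * (ϑ - ϑs) * (1 - β) ≤ (L ϑ - L ϑs) * (1 - β) := by
      have e2 : m * (ϑ - ϑs) * (1 - β) = β * (ϑ - ϑs) / ϑs^2 := by
        rw [hmdef]; field_simp
      rw [e2]; linarith
    have := le_of_mul_le_mul_right h3 h1β
    linarith
  -- derivative bounds
  have hdLle : dL ≤ m := by
    have ht := hasDerivWithinAt_iff_tendsto_slope.mp hdL
    rw [Set.diff_singleton_eq_self (by simp)] at ht
    refine le_of_tendsto ht ?_
    filter_upwards [self_mem_nhdsWithin] with y hy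
    have h1 := hlower y
    have hy' : y - ϑs < 0 := by simpa [sub_neg] using hy
    rw [slope_def_field, div_le_iff_of_neg hy']
    linarith
  have hdL0 : 0 ≤ dL := by
    have ht := hasDerivWithinAt_iff_tendsto_slope.mp hdL
    rw [Set.diff_singleton_eq_self (by simp)] at ht
    refine ge_of_tendsto ht ?_
    filter_upwards [self_mem_nhdsWithin] with y hy
    have h1 : L y ≤ L ϑs := hmono y ϑs (le_of_lt hy)
    have hy' : y - ϑs < 0 := by simpa [sub_neg] using hy
    rw [slope_def_field, le_div_iff_of_neg hy']
    linarith
  have hdRge : m ≤ dR := by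
    have ht := hasDerivWithinAt_iff_tendsto_slope.mp hdR
    rw [Set.diff_singleton_eq_self (by simp)] at ht
    refine ge_of_tendsto ht ?_
    filter_upwards [self_mem_nhdsWithin] with y hy
    have h1 := hlower y
    have hy' : 0 < y - ϑs := by simpa [sub_pos] using hy
    rw [slope_def_field, le_div_iff₀ hy']
    linarith
  -- conclusion
  have hcpos : (0:ℝ) < 1 / ϑs ^ 2 := by positivity
  clear_value β m lam
  have hmc : (0:ℝ) < m + 1 / ϑs ^ 2 := by linarith
  have hβm' : β * (m + 1 / ϑs ^ 2) = m := by
    have hs2 : (ϑs:ℝ) ^ 2 ≠ 0 := by positivity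
    have h4 : m * (1 - β) = β / ϑs ^ 2 := by
      rw [eq_div_iff hs2]
      linear_combination hmβ
    linear_combination (-1 : ℝ) * h4
  have hβm : β = m / (m + 1 / ϑs ^ 2) := by
    rw [eq_div_iff (ne_of_gt hmc)]
    exact hβm'
  have hdLc : (0:ℝ) < dL + 1 / ϑs ^ 2 := by linarith
  have hdR0 : 0 ≤ dR := le_trans hm0 hdRge
  have hdRc : (0:ℝ) < dR + 1 / ϑs ^ 2 := by linarith
  have hmain : β ∈ Set.Icc (dL / (dL + 1 / ϑs ^ 2)) (dR / (dR + 1 / ϑs ^ 2)) := by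
    constructor
    · rw [hβm]
      exact div_mono_arith hcpos hdL0 hdLle
    · rw [hβm]
      exact div_mono_arith hcpos hm0 hdRge
  refine ⟨hmain, ?_⟩
  intro d hd
  have h1 : dL = d := by
    rw [← hdL.derivWithin (uniqueDiffWithinAt_Iio ϑs),
      (hd.hasDerivWithinAt).derivWithin (uniqueDiffWithinAt_Iio ϑs)]
  have h2 : dR = d := by
    rw [← hdR.derivWithin (uniqueDiffWithinAt_Ioi ϑs),
      (hd.hasDerivWithinAt).derivWithin (uniqueDiffWithinAt_Ioi ϑs)]
  rw [h1] at hmain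
  rw [h2] at hmain
  exact le_antisymm hmain.2 hmain.1


end
end

section
/- Let A ∈ ℂ^{m×n} have columns A = [A₁, A₋₁] with A₋₁^H T A₁ ≠ 0, where T is an m×m real diagonal matrix, and set M = A^H T A. Define L_m(ϑ) = λ₁(A₋₁^H (T + ϑ T A₁ (T A₁)^H) A₋₁) for ϑ > 0. Then there is a unique ϑ_m > 0 solving L_m(ϑ) = 1/ϑ + A₁^H T A₁, and λ₁(M) = L_m(ϑ_m). Moreover, if x̂ is a unit-norm eigenvector of M for λ₁(M), then |e₁^H x̂|² ∈ [∂₋L_m(ϑ_m)/(∂₋L_m(ϑ_m) + 1/ϑ_m²), ∂₊L_m(ϑ_m)/(∂₊L_m(ϑ_m) + 1/ϑ_m²)]; if L_m is differentiable at ϑ_m then |e₁^H x̂|² = L_m'(ϑ_m)/(L_m'(ϑ_m) + 1/ϑ_m²). -/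
open Matrix
open scoped InnerProductSpace

noncomputable section

variable {ι : Type*} [Fintype ι] [DecidableEq ι]

omit [DecidableEq ι] in
lemma herm_adj {A : Matrix ι ι ℂ} (hA : A.IsHermitian) (x y : ι → ℂ) :
    star (A *ᵥ x) ⬝ᵥ y = star x ⬝ᵥ (A *ᵥ y) := by
  rw [star_mulVec, dotProduct_mulVec, hA.eq]

omit [DecidableEq ι] in
lemma re_star_dot (v : ι → ℂ) : (star v ⬝ᵥ v).re = ∑ i, ‖v i‖ ^ 2 := by
  rw [dotProduct, Complex.re_sum]
  refine Finset.sum_congr rfl fun i _ => ?_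
  simp only [Pi.star_apply, Complex.star_def, ← Complex.normSq_eq_conj_mul_self, Complex.ofReal_re,
    Complex.normSq_eq_norm_sq]

lemma rayleigh_le_of_forall {A : Matrix ι ι ℂ} (hA : A.IsHermitian) (μ : ℝ)
    (hμ : ∀ i, hA.eigenvalues i ≤ μ) (v : ι → ℂ) :
    (star v ⬝ᵥ (A *ᵥ v)).re ≤ μ * ∑ i, ‖v i‖ ^ 2 := by
  classical
  set b := hA.eigenvectorBasis with hb
  set v' : EuclideanSpace ℂ ι := WithLp.toLp 2 v with hv'
  have hbv : ∀ i, ⟪b i, (WithLp.toLp 2 (A *ᵥ v))⟫_ℂ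
      = (hA.eigenvalues i : ℂ) * ⟪b i, v'⟫_ℂ := by
    intro i
    have h1 : ⟪b i, (WithLp.toLp 2 (A *ᵥ v))⟫_ℂ = star (⇑(b i)) ⬝ᵥ (A *ᵥ v) := by rw [EuclideanSpace.inner_eq_star_dotProduct]; exact dotProduct_comm _ _
    have h2 : ⟪b i, v'⟫_ℂ = star (⇑(b i)) ⬝ᵥ v := by rw [EuclideanSpace.inner_eq_star_dotProduct]; exact dotProduct_comm _ _
    rw [h1, h2, ← herm_adj hA, hA.mulVec_eigenvectorBasis]
    simp [star_smul, smul_dotProduct, Complex.real_smul, hb]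
  have key : (star v ⬝ᵥ (A *ᵥ v)) = ∑ i, (hA.eigenvalues i : ℂ) * (⟪v', b i⟫_ℂ * ⟪b i, v'⟫_ℂ) := by
    have := b.sum_inner_mul_inner v' (WithLp.toLp 2 (A *ᵥ v))
    have h0 : ⟪v', (WithLp.toLp 2 (A *ᵥ v))⟫_ℂ = star v ⬝ᵥ (A *ᵥ v) := by rw [EuclideanSpace.inner_eq_star_dotProduct]; exact dotProduct_comm _ _
    rw [h0] at this
    rw [← this]
    refine Finset.sum_congr rfl fun i _ => ?_
    rw [hbv i]; ring
  have habs : ∀ i, (⟪v', b i⟫_ℂ * ⟪b i, v'⟫_ℂ) = (‖⟪b i, v'⟫_ℂ‖ ^ 2 : ℝ) := by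
    intro i
    have h1 : ⟪v', b i⟫_ℂ = (starRingEnd ℂ) ⟪b i, v'⟫_ℂ := (inner_conj_symm v' (b i)).symm
    rw [h1, ← Complex.normSq_eq_conj_mul_self, Complex.normSq_eq_norm_sq]

  have hnorm : ∑ i, ‖⟪b i, v'⟫_ℂ‖ ^ 2 = ∑ i, ‖v i‖ ^ 2 := by
    have := b.sum_inner_mul_inner v' v'
    have h0 : ⟪v', v'⟫_ℂ = star v ⬝ᵥ v := by rw [EuclideanSpace.inner_eq_star_dotProduct]; exact dotProduct_comm _ _
    rw [h0] at this
    rw [show (∑ i, ⟪v', b i⟫_ℂ * ⟪b i, v'⟫_ℂ) = ∑ i, ((‖⟪b i, v'⟫_ℂ‖ ^ 2 : ℝ) : ℂ)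
      from Finset.sum_congr rfl fun i _ => habs i] at this
    have h2 := congrArg Complex.re this
    rw [Complex.re_sum, re_star_dot] at h2
    simp only [Complex.ofReal_re] at h2
    exact h2
  calc (star v ⬝ᵥ (A *ᵥ v)).re = ∑ i, hA.eigenvalues i * ‖⟪b i, v'⟫_ℂ‖ ^ 2 := by
        rw [key, Complex.re_sum]
        refine Finset.sum_congr rfl fun i _ => ?_
        rw [habs i, ← Complex.ofReal_mul, Complex.ofReal_re]
    _ ≤ ∑ i, μ * ‖⟪b i, v'⟫_ℂ‖ ^ 2 := by
        refine Finset.sum_le_sum fun i _ => ?_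
        exact mul_le_mul_of_nonneg_right (hμ i) (by positivity)
    _ = μ * ∑ i, ‖v i‖ ^ 2 := by rw [← Finset.mul_sum, hnorm]

section LMax
variable [Nonempty ι] {A : Matrix ι ι ℂ}

lemma eig_mem (hA : A.IsHermitian) (i : ι) :
    hA.eigenvalues i ∈ {r : ℝ | ∃ v : ι → ℂ, v ≠ 0 ∧ A *ᵥ v = (r : ℂ) • v} := by
  refine ⟨⇑(hA.eigenvectorBasis i), ?_, ?_⟩
  · have := hA.eigenvectorBasis.orthonormal.ne_zero i
    intro h
    apply this
    ext j
    exact congrFun h j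
  · rw [hA.mulVec_eigenvectorBasis]
    funext j
    simp [Complex.real_smul]

lemma sq_sum_pos {v : ι → ℂ} (hv : v ≠ 0) : 0 < ∑ i, ‖v i‖ ^ 2 := by
  obtain ⟨i, hi⟩ : ∃ i, v i ≠ 0 := by
    by_contra h; push_neg at h; exact hv (funext h)
  exact Finset.sum_pos' (fun j _ => by positivity)
    ⟨i, Finset.mem_univ i, pow_pos (norm_pos_iff.mpr hi) 2⟩

lemma lambdaMax_isGreatest (hA : A.IsHermitian) :
    IsGreatest {r : ℝ | ∃ v : ι → ℂ, v ≠ 0 ∧ A *ᵥ v = (r : ℂ) • v} (lambdaMax A) := by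
  classical
  obtain ⟨i₀, -, hi₀⟩ := Finset.exists_max_image Finset.univ hA.eigenvalues
    ⟨Classical.arbitrary ι, Finset.mem_univ _⟩
  have hub : ∀ r ∈ {r : ℝ | ∃ v : ι → ℂ, v ≠ 0 ∧ A *ᵥ v = (r : ℂ) • v},
      r ≤ hA.eigenvalues i₀ := by
    rintro r ⟨v, hv, hAv⟩
    have h1 : (star v ⬝ᵥ (A *ᵥ v)).re = r * ∑ i, ‖v i‖ ^ 2 := by
      rw [hAv, dotProduct_smul]
      have : ((r : ℂ) * (star v ⬝ᵥ v)).re = r * (star v ⬝ᵥ v).re := by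
        simp [Complex.mul_re]
      simpa [re_star_dot] using this
    have h2 := rayleigh_le_of_forall hA (hA.eigenvalues i₀) (fun i => hi₀ i (Finset.mem_univ i)) v
    rw [h1] at h2
    exact le_of_mul_le_mul_right h2 (sq_sum_pos hv)
  have hgr : IsGreatest {r : ℝ | ∃ v : ι → ℂ, v ≠ 0 ∧ A *ᵥ v = (r : ℂ) • v}
      (hA.eigenvalues i₀) := ⟨eig_mem hA i₀, hub⟩
  rwa [show lambdaMax A = hA.eigenvalues i₀ from hgr.csSup_eq]

lemma lambdaMax_rayleigh (hA : A.IsHermitian) (v : ι → ℂ) :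
    (star v ⬝ᵥ (A *ᵥ v)).re ≤ lambdaMax A * ∑ i, ‖v i‖ ^ 2 :=
  rayleigh_le_of_forall hA (lambdaMax A)
    (fun i => (lambdaMax_isGreatest hA).2 (eig_mem hA i)) v

lemma lambdaMax_exists_unit (hA : A.IsHermitian) :
    ∃ v : ι → ℂ, (∑ i, ‖v i‖ ^ 2 = 1) ∧
      A *ᵥ v = ((lambdaMax A : ℝ) : ℂ) • v := by
  obtain ⟨v, hv, hAv⟩ := (lambdaMax_isGreatest hA).1
  have hn : 0 < ∑ i, ‖v i‖ ^ 2 := sq_sum_pos hv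
  set c : ℝ := (Real.sqrt (∑ i, ‖v i‖ ^ 2))⁻¹ with hc
  refine ⟨(c : ℂ) • v, ?_, ?_⟩
  · have hcs : c ^ 2 * (∑ i, ‖v i‖ ^ 2) = 1 := by
      rw [hc, inv_pow, Real.sq_sqrt hn.le]
      field_simp
    calc ∑ i, ‖((c : ℂ) • v) i‖ ^ 2
        = ∑ i, c ^ 2 * ‖v i‖ ^ 2 := by
          refine Finset.sum_congr rfl fun i _ => ?_
          simp [Pi.smul_apply, norm_mul, Complex.norm_real, Real.norm_eq_abs, mul_pow, abs_of_nonneg (by positivity : (0:ℝ) ≤ c)]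
      _ = 1 := by rw [← Finset.mul_sum, hcs]
  · rw [mulVec_smul, hAv, smul_comm]

end LMax

section Slope

lemma Ioo_mem_left {b c : ℝ} (hc : c < b) : Set.Ioo c b ∈ nhdsWithin b (Set.Iio b) := by
  rw [mem_nhdsWithin]
  exact ⟨Set.Ioi c, isOpen_Ioi, hc, by rintro x ⟨h1, h2⟩; exact ⟨h1, h2⟩⟩

lemma Ioo_mem_right {b c : ℝ} (hc : b < c) : Set.Ioo b c ∈ nhdsWithin b (Set.Ioi b) := by
  rw [mem_nhdsWithin]
  exact ⟨Set.Iio c, isOpen_Iio, hc, by rintro x ⟨h1, h2⟩; exact ⟨h2, h1⟩⟩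

lemma deriv_left_nonpos {f : ℝ → ℝ} {d b c : ℝ} (hc : c < b)
    (hd : HasDerivWithinAt f d (Set.Iio b) b) (h : ∀ x ∈ Set.Ioo c b, f b ≤ f x) : d ≤ 0 := by
  rw [hasDerivWithinAt_iff_tendsto_slope, Set.diff_singleton_eq_self (by simp)] at hd
  refine le_of_tendsto hd (Filter.eventually_of_mem (Ioo_mem_left hc) fun x hx => ?_)
  rw [slope_def_field, div_eq_inv_mul]
  have h1 : f x - f b ≥ 0 := sub_nonneg.2 (h x hx)
  have h2 : x - b < 0 := sub_neg.2 hx.2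
  exact mul_nonpos_of_nonpos_of_nonneg (inv_nonpos.2 h2.le) h1

lemma deriv_left_nonneg {f : ℝ → ℝ} {d b c : ℝ} (hc : c < b)
    (hd : HasDerivWithinAt f d (Set.Iio b) b) (h : ∀ x ∈ Set.Ioo c b, f x ≤ f b) : 0 ≤ d := by
  rw [hasDerivWithinAt_iff_tendsto_slope, Set.diff_singleton_eq_self (by simp)] at hd
  refine ge_of_tendsto hd (Filter.eventually_of_mem (Ioo_mem_left hc) fun x hx => ?_)
  rw [slope_def_field, div_eq_inv_mul]
  have h1 : f x - f b ≤ 0 := sub_nonpos.2 (h x hx)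
  have h2 : x - b < 0 := sub_neg.2 hx.2
  exact mul_nonneg_of_nonpos_of_nonpos (inv_nonpos.2 h2.le) h1

lemma deriv_right_nonneg {f : ℝ → ℝ} {d b c : ℝ} (hc : b < c)
    (hd : HasDerivWithinAt f d (Set.Ioi b) b) (h : ∀ x ∈ Set.Ioo b c, f b ≤ f x) : 0 ≤ d := by
  rw [hasDerivWithinAt_iff_tendsto_slope, Set.diff_singleton_eq_self (by simp)] at hd
  refine ge_of_tendsto hd (Filter.eventually_of_mem (Ioo_mem_right hc) fun x hx => ?_)
  rw [slope_def_field]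
  have h1 : f x - f b ≥ 0 := sub_nonneg.2 (h x hx)
  have h2 : x - b > 0 := sub_pos.2 hx.1
  positivity

end Slope

section Helpers
variable {m k : ℕ}

lemma conj_mul_self' (z : ℂ) : (starRingEnd ℂ) z * z = ((‖z‖ ^ 2 : ℝ) : ℂ) := by
  rw [← Complex.normSq_eq_conj_mul_self, Complex.sq_norm]

lemma abs_dot_sq_le {ι : Type*} [Fintype ι] (w y : ι → ℂ) :
    ‖star w ⬝ᵥ y‖ ^ 2 ≤ (∑ j, ‖w j‖ ^ 2) * (∑ j, ‖y j‖ ^ 2) := by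
  set w' : EuclideanSpace ℂ ι := WithLp.toLp 2 w
  set y' : EuclideanSpace ℂ ι := WithLp.toLp 2 y
  have h0 : ⟪w', y'⟫_ℂ = star w ⬝ᵥ y := by rw [EuclideanSpace.inner_eq_star_dotProduct]; exact dotProduct_comm _ _
  have h := norm_inner_le_norm (𝕜 := ℂ) w' y'
  rw [h0] at h
  have h2 : ‖star w ⬝ᵥ y‖ ^ 2 ≤ (‖w'‖ * ‖y'‖) ^ 2 := by
    exact pow_le_pow_left₀ (norm_nonneg _) h 2
  refine h2.trans (le_of_eq ?_)
  have hw : ‖w'‖ ^ 2 = ∑ j, ‖w j‖ ^ 2 := by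
    rw [EuclideanSpace.norm_eq, Real.sq_sqrt (by positivity)]
  have hy : ‖y'‖ ^ 2 = ∑ j, ‖y j‖ ^ 2 := by
    rw [EuclideanSpace.norm_eq, Real.sq_sqrt (by positivity)]
  rw [mul_pow, hw, hy]

lemma adjgen (B : Matrix (Fin m) (Fin k) ℂ) (x : Fin k → ℂ) (z : Fin m → ℂ) :
    star x ⬝ᵥ (Bᴴ *ᵥ z) = star (B *ᵥ x) ⬝ᵥ z := by
  rw [star_mulVec, dotProduct_mulVec]

lemma vvmul (w y : Fin k → ℂ) : vecMulVec w (star w) *ᵥ y = (star w ⬝ᵥ y) • w := by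
  funext i
  simp only [mulVec, vecMulVec_apply, dotProduct, Pi.star_apply, Pi.smul_apply, smul_eq_mul,
    Finset.sum_mul]
  exact Finset.sum_congr rfl fun j _ => by ring

lemma BvvB (B : Matrix (Fin m) (Fin k) ℂ) (u : Fin m → ℂ) :
    Bᴴ * vecMulVec u (star u) * B = vecMulVec (Bᴴ *ᵥ u) (star (Bᴴ *ᵥ u)) := by
  ext i j
  simp only [mul_apply, vecMulVec_apply, conjTranspose_apply, Pi.star_apply, mulVec, dotProduct,
    star_sum, star_mul', star_star]
  rw [Finset.sum_mul_sum]
  rw [Finset.sum_comm]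
  refine Finset.sum_congr rfl fun q _ => ?_
  rw [Finset.sum_mul]
  refine Finset.sum_congr rfl fun p _ => ?_
  ring

lemma quad_diag (T : Fin m → ℝ) (z : Fin m → ℂ) :
    star z ⬝ᵥ (Matrix.diagonal (fun i => (T i : ℂ)) *ᵥ z)
      = ∑ i, (T i : ℂ) * ((starRingEnd ℂ) (z i) * z i) := by
  rw [dotProduct]
  refine Finset.sum_congr rfl fun i _ => ?_
  rw [mulVec_diagonal]
  simp [Pi.star_apply, Complex.star_def]
  ring

end Helpers

set_option maxHeartbeats 2000000 in
/-- Let `A = [A₁, A₋₁]` with `A₋₁ᴴ T A₁ ≠ 0`, `T` real diagonal, and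
`M = Aᴴ T A`.  With `L_m(ϑ) = λ₁(A₋₁ᴴ (T + ϑ T A₁ (T A₁)ᴴ) A₋₁)`, there is a unique `ϑ_m > 0`
solving `L_m(ϑ) = 1/ϑ + A₁ᴴ T A₁`, `λ₁(M) = L_m(ϑ_m)`, and any unit leading eigenvector `x̂`
of `M` satisfies the stated one-sided-derivative bounds for `|e₁ᴴ x̂|²`. -/
theorem stmt6 (msz k : ℕ) (A : Matrix (Fin msz) (Fin (k + 1)) ℂ) (T : Fin msz → ℝ)
    (hA1 : (Matrix.of fun i (j : Fin k) => A i j.succ)ᴴ *ᵥ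
        (Matrix.diagonal (fun i => (T i : ℂ)) *ᵥ fun i => A i 0) ≠ 0)
    (Mmat : Matrix (Fin (k + 1)) (Fin (k + 1)) ℂ)
    (hM : Mmat = Aᴴ * Matrix.diagonal (fun i => (T i : ℂ)) * A)
    (a : ℝ) (ha : a = ∑ i, T i * ‖A i 0‖ ^ 2)
    (L : ℝ → ℝ)
    (hL : ∀ ϑ : ℝ, L ϑ = lambdaMax ((Matrix.of fun i (j : Fin k) => A i j.succ)ᴴ *
      (Matrix.diagonal (fun i => (T i : ℂ)) +
        (ϑ : ℂ) • Matrix.vecMulVec (fun i => (T i : ℂ) * A i 0)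
          (star (fun i => (T i : ℂ) * A i 0))) *
      (Matrix.of fun i (j : Fin k) => A i j.succ))) :
    (∃! ϑ : ℝ, 0 < ϑ ∧ L ϑ = 1 / ϑ + a) ∧
      ∀ ϑm : ℝ, 0 < ϑm → L ϑm = 1 / ϑm + a →
        lambdaMax Mmat = L ϑm ∧
        ∀ xh : Fin (k + 1) → ℂ, (∑ i, ‖xh i‖ ^ 2 = 1) →
          Mmat *ᵥ xh = ((lambdaMax Mmat : ℝ) : ℂ) • xh →
          (∀ dL dR : ℝ, HasDerivWithinAt L dL (Set.Iio ϑm) ϑm →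
            HasDerivWithinAt L dR (Set.Ioi ϑm) ϑm →
            ‖xh 0‖ ^ 2 ∈
              Set.Icc (dL / (dL + 1 / ϑm ^ 2)) (dR / (dR + 1 / ϑm ^ 2))) ∧
          ∀ d : ℝ, HasDerivAt L d ϑm →
            ‖xh 0‖ ^ 2 = d / (d + 1 / ϑm ^ 2) := by
  -- ## setup
  set B : Matrix (Fin msz) (Fin k) ℂ := Matrix.of fun i (j : Fin k) => A i j.succ with hBdef
  set D : Matrix (Fin msz) (Fin msz) ℂ := Matrix.diagonal (fun i => (T i : ℂ)) with hDdef
  set u : Fin msz → ℂ := fun i => (T i : ℂ) * A i 0 with hudef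
  set w : Fin k → ℂ := Bᴴ *ᵥ u with hwdef
  have hw : w ≠ 0 := by
    have hDu : (D *ᵥ fun i => A i 0) = u := by
      funext i
      rw [mulVec_diagonal]
    rw [hwdef, ← hDu]
    exact hA1
  haveI : Nonempty (Fin k) := by
    obtain ⟨j, hj⟩ := Function.ne_iff.1 hw
    exact ⟨j⟩
  set C : Matrix (Fin k) (Fin k) ℂ := Bᴴ * D * B with hCdef
  set Nm : ℝ → Matrix (Fin k) (Fin k) ℂ :=
    fun ϑ => C + (ϑ : ℂ) • vecMulVec w (star w) with hNmdef
  have hDh : Dᴴ = D := by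
    have hst : (star fun i => ((T i : ℝ) : ℂ)) = (fun i => ((T i : ℝ) : ℂ)) :=
      funext fun i => Complex.conj_ofReal _
    rw [hDdef, diagonal_conjTranspose, hst]
  have hCh : C.IsHermitian := by
    show Cᴴ = C
    rw [hCdef, conjTranspose_mul, conjTranspose_mul, conjTranspose_conjTranspose, hDh,
      Matrix.mul_assoc]
  have hMh : Mmat.IsHermitian := by
    show Mmatᴴ = Mmat
    rw [hM, conjTranspose_mul, conjTranspose_mul, conjTranspose_conjTranspose, hDh,
      Matrix.mul_assoc]
  have hWh : (vecMulVec w (star w))ᴴ = vecMulVec w (star w) := by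
    ext i j
    simp only [conjTranspose_apply, vecMulVec_apply, Pi.star_apply, star_mul', star_star]
    exact mul_comm _ _
  have hNh : ∀ ϑ : ℝ, (Nm ϑ).IsHermitian := by
    intro ϑ
    show (Nm ϑ)ᴴ = Nm ϑ
    rw [hNmdef]
    simp only
    rw [conjTranspose_add, conjTranspose_smul, hWh, hCh.eq, Complex.star_def,
      Complex.conj_ofReal]
  -- ## L in terms of Nm
  have hLN : ∀ ϑ : ℝ, L ϑ = lambdaMax (Nm ϑ) := by
    intro ϑ
    rw [hL ϑ]
    congr 1
    rw [Matrix.mul_add, Matrix.add_mul, Matrix.mul_smul, Matrix.smul_mul, BvvB]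
  -- ## quadratic forms
  have qN : ∀ (ϑ : ℝ) (y : Fin k → ℂ), (star y ⬝ᵥ (Nm ϑ *ᵥ y)).re
      = (star y ⬝ᵥ (C *ᵥ y)).re + ϑ * ‖star w ⬝ᵥ y‖ ^ 2 := by
    intro ϑ y
    have h1 : Nm ϑ *ᵥ y = C *ᵥ y + (ϑ : ℂ) • ((star w ⬝ᵥ y) • w) := by
      rw [hNmdef]
      simp only
      rw [add_mulVec, smul_mulVec, vvmul]
    have h2 : star y ⬝ᵥ w = (starRingEnd ℂ) (star w ⬝ᵥ y) := by
      rw [dotProduct, dotProduct, map_sum]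
      refine Finset.sum_congr rfl fun j _ => ?_
      simp only [Pi.star_apply, Complex.star_def, _root_.map_mul, Complex.conj_conj]
      ring
    rw [h1, dotProduct_add, dotProduct_smul, dotProduct_smul, smul_eq_mul, smul_eq_mul, h2,
      Complex.mul_conj]
    rw [Complex.add_re, Complex.mul_re]
    simp only [Complex.ofReal_re, Complex.ofReal_im, zero_mul, sub_zero, mul_zero]
    rw [Complex.normSq_eq_norm_sq]
  have hswtail : ∀ xt : Fin k → ℂ, star u ⬝ᵥ (B *ᵥ xt) = star w ⬝ᵥ xt := by
    intro xt
    rw [hwdef, star_mulVec, conjTranspose_conjTranspose, dotProduct_mulVec]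
  have qtail : ∀ x : Fin (k + 1) → ℂ,
      (star x ⬝ᵥ (Mmat *ᵥ x)).re = a * ‖x 0‖ ^ 2
        + 2 * ((starRingEnd ℂ) (x 0) * (star w ⬝ᵥ fun j => x j.succ)).re
        + (star (fun j => x j.succ) ⬝ᵥ (C *ᵥ fun j => x j.succ)).re := by
    intro x
    set x0 : ℂ := x 0 with hx0def
    set xt : Fin k → ℂ := fun j => x j.succ with hxtdef
    set g : Fin msz → ℂ := B *ᵥ xt with hgdef
    set s : ℂ := star w ⬝ᵥ xt with hsdef
    have hz : A *ᵥ x = fun i => x0 * A i 0 + g i := by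
      funext i
      rw [mulVec, dotProduct, Fin.sum_univ_succ]
      congr 1
      exact mul_comm _ _
    have hMx : star x ⬝ᵥ (Mmat *ᵥ x) = star (A *ᵥ x) ⬝ᵥ (D *ᵥ (A *ᵥ x)) := by
      rw [hM, ← mulVec_mulVec, ← mulVec_mulVec, adjgen]
    have hug : ∑ i, (starRingEnd ℂ) (u i) * g i = s := by
      have h1 : ∑ i, (starRingEnd ℂ) (u i) * g i = star u ⬝ᵥ g := by
        rw [dotProduct]
        exact Finset.sum_congr rfl fun i _ => rfl
      rw [h1, hgdef, hswtail]
    have hterms : ∑ i, (T i : ℂ) * ((starRingEnd ℂ) ((A *ᵥ x) i) * ((A *ᵥ x) i))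
        = ∑ i, ((T i : ℂ) * ((starRingEnd ℂ) (A i 0) * A i 0) * ((starRingEnd ℂ) x0 * x0)
          + (starRingEnd ℂ) x0 * ((starRingEnd ℂ) (u i) * g i)
          + (starRingEnd ℂ) ((starRingEnd ℂ) x0 * ((starRingEnd ℂ) (u i) * g i))
          + (starRingEnd ℂ) (g i) * ((T i : ℂ) * g i)) := by
      refine Finset.sum_congr rfl fun i _ => ?_
      have hzi : (A *ᵥ x) i = x0 * A i 0 + g i := congrFun hz i
      rw [hzi]
      simp only [hudef, map_add, _root_.map_mul, Complex.conj_conj, Complex.conj_ofReal]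
      ring
    have hsplit : star (A *ᵥ x) ⬝ᵥ (D *ᵥ (A *ᵥ x))
        = ((a : ℝ) : ℂ) * ((starRingEnd ℂ) x0 * x0) + ((starRingEnd ℂ) x0 * s)
          + (starRingEnd ℂ) ((starRingEnd ℂ) x0 * s) + star xt ⬝ᵥ (C *ᵥ xt) := by
      rw [hDdef, quad_diag T (A *ᵥ x)]
      rw [hterms, Finset.sum_add_distrib, Finset.sum_add_distrib, Finset.sum_add_distrib]
      have e1 : ∑ i, (T i : ℂ) * ((starRingEnd ℂ) (A i 0) * A i 0) * ((starRingEnd ℂ) x0 * x0)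
          = ((a : ℝ) : ℂ) * ((starRingEnd ℂ) x0 * x0) := by
        rw [← Finset.sum_mul]
        congr 1
        rw [ha, Complex.ofReal_sum]
        refine Finset.sum_congr rfl fun i _ => ?_
        rw [conj_mul_self' (A i 0), Complex.ofReal_mul]
      have e2 : ∑ i, (starRingEnd ℂ) x0 * ((starRingEnd ℂ) (u i) * g i)
          = (starRingEnd ℂ) x0 * s := by
        rw [← Finset.mul_sum, hug]
      have e3 : ∑ i, (starRingEnd ℂ) ((starRingEnd ℂ) x0 * ((starRingEnd ℂ) (u i) * g i))
          = (starRingEnd ℂ) ((starRingEnd ℂ) x0 * s) := by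
        rw [← map_sum, ← Finset.mul_sum, hug]
      have e4 : ∑ i, (starRingEnd ℂ) (g i) * ((T i : ℂ) * g i) = star xt ⬝ᵥ (C *ᵥ xt) := by
        have h1 : ∑ i, (starRingEnd ℂ) (g i) * ((T i : ℂ) * g i)
            = star g ⬝ᵥ (Matrix.diagonal (fun i => (T i : ℂ)) *ᵥ g) := by
          rw [quad_diag T g]
          exact Finset.sum_congr rfl fun i _ => by ring
        rw [h1]
        have h2 := (adjgen B xt (Matrix.diagonal (fun i => (T i : ℂ)) *ᵥ g)).symm
        rw [hgdef] at h2 ⊢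
        rw [h2, mulVec_mulVec, mulVec_mulVec, hCdef, hDdef, Matrix.mul_assoc]
      rw [e1, e2, e3, e4]
    rw [hMx, hsplit, Complex.add_re, Complex.add_re, Complex.add_re, Complex.conj_re]
    have hare : (((a : ℝ) : ℂ) * ((starRingEnd ℂ) x0 * x0)).re = a * ‖x0‖ ^ 2 := by
      rw [conj_mul_self', ← Complex.ofReal_mul]
      exact Complex.ofReal_re _
    rw [hare]
    ring
  -- ## facts about L
  set K : ℝ := ∑ j, ‖w j‖ ^ 2 with hKdef
  have hK : 0 < K := sq_sum_pos hw
  have rayBound : ∀ (ϑ : ℝ) (y : Fin k → ℂ),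
      (star y ⬝ᵥ (C *ᵥ y)).re + ϑ * ‖star w ⬝ᵥ y‖ ^ 2
        ≤ L ϑ * ∑ j, ‖y j‖ ^ 2 := by
    intro ϑ y
    rw [← qN, hLN]
    exact lambdaMax_rayleigh (hNh ϑ) y
  have attain : ∀ ϑ : ℝ, ∃ y : Fin k → ℂ, (∑ j, ‖y j‖ ^ 2 = 1) ∧
      (star y ⬝ᵥ (C *ᵥ y)).re + ϑ * ‖star w ⬝ᵥ y‖ ^ 2 = L ϑ := by
    intro ϑ
    obtain ⟨y, hy1, hy2⟩ := lambdaMax_exists_unit (hNh ϑ)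
    refine ⟨y, hy1, ?_⟩
    rw [← qN, hy2, dotProduct_smul, smul_eq_mul]
    have : ((L ϑ : ℝ) : ℂ) = ((lambdaMax (Nm ϑ) : ℝ) : ℂ) := by rw [hLN]
    rw [← this] at hy2 ⊢
    rw [Complex.mul_re]
    simp only [Complex.ofReal_re, Complex.ofReal_im, zero_mul, sub_zero]
    rw [re_star_dot, hy1, mul_one]
  have Lmono : Monotone L := by
    intro ϑ₁ ϑ₂ h12
    obtain ⟨y, hy1, hy2⟩ := attain ϑ₁
    calc L ϑ₁ = (star y ⬝ᵥ (C *ᵥ y)).re + ϑ₁ * ‖star w ⬝ᵥ y‖ ^ 2 := hy2.symm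
      _ ≤ (star y ⬝ᵥ (C *ᵥ y)).re + ϑ₂ * ‖star w ⬝ᵥ y‖ ^ 2 := by
          have := mul_le_mul_of_nonneg_right h12 (by positivity : (0:ℝ) ≤ ‖star w ⬝ᵥ y‖ ^ 2)
          linarith
      _ ≤ L ϑ₂ * ∑ j, ‖y j‖ ^ 2 := rayBound ϑ₂ y
      _ = L ϑ₂ := by rw [hy1, mul_one]
  have Llip : ∀ ϑ₁ ϑ₂ : ℝ, ϑ₁ ≤ ϑ₂ → L ϑ₂ ≤ L ϑ₁ + (ϑ₂ - ϑ₁) * K := by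
    intro ϑ₁ ϑ₂ h12
    obtain ⟨y, hy1, hy2⟩ := attain ϑ₂
    have hcs : ‖star w ⬝ᵥ y‖ ^ 2 ≤ K := by
      have := abs_dot_sq_le w y
      rw [hy1, mul_one] at this
      exact this
    have hray := rayBound ϑ₁ y
    rw [hy1, mul_one] at hray
    nlinarith [hy2, hray]
  have Lcont : Continuous L := by
    have : LipschitzWith (Real.toNNReal K) L := by
      refine LipschitzWith.of_dist_le_mul fun x y => ?_
      have hKK : (Real.toNNReal K : ℝ) = K := Real.coe_toNNReal K hK.le
      rw [Real.dist_eq, Real.dist_eq, hKK]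
      rcases le_total x y with h | h
      · have h1 := Llip x y h
        have h2 := Lmono h
        rw [abs_of_nonpos (by linarith), abs_of_nonpos (by linarith)]
        nlinarith
      · have h1 := Llip y x h
        have h2 := Lmono h
        rw [abs_of_nonneg (by linarith), abs_of_nonneg (by linarith)]
        nlinarith
    exact this.continuous
  have Lgrow : ∀ ϑ : ℝ, (star w ⬝ᵥ (C *ᵥ w)).re + ϑ * K ^ 2 ≤ L ϑ * K := by
    intro ϑ
    have h1 := rayBound ϑ w
    have h2 : star w ⬝ᵥ w = ((K : ℝ) : ℂ) := by
      rw [dotProduct, hKdef, Complex.ofReal_sum]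
      refine Finset.sum_congr rfl fun j _ => ?_
      rw [Pi.star_apply]
      exact conj_mul_self' (w j)
    rw [h2] at h1
    simp only [Complex.norm_real, Real.norm_eq_abs, abs_of_nonneg hK.le] at h1
    exact h1
  -- ## existence and uniqueness of the root
  set c0 : ℝ := (star w ⬝ᵥ (C *ᵥ w)).re with hc0def
  have hLg : ∀ ϑ : ℝ, c0 / K + ϑ * K ≤ L ϑ := by
    intro ϑ
    have h := Lgrow ϑ
    have heq : (c0 / K + ϑ * K) * K = c0 + ϑ * K ^ 2 := by
      field_simp
    exact le_of_mul_le_mul_right (by rw [heq]; exact h) hK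
  have exun : ∃! ϑ : ℝ, 0 < ϑ ∧ L ϑ = 1 / ϑ + a := by
    have hden : (0:ℝ) < 1 + |L 1| + |a| := by positivity
    set ϑ₀ : ℝ := min 1 (1 / (1 + |L 1| + |a|)) with hϑ₀def
    have hϑ₀pos : 0 < ϑ₀ := lt_min one_pos (by positivity)
    have hϑ₀le1 : ϑ₀ ≤ 1 := min_le_left _ _
    have hrec : 1 + |L 1| + |a| ≤ 1 / ϑ₀ := by
      have h := one_div_le_one_div_of_le hϑ₀pos (min_le_right 1 (1 / (1 + |L 1| + |a|)))
      rwa [one_div_one_div] at h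
    have hf0 : L ϑ₀ - 1 / ϑ₀ - a ≤ -1 := by
      have h1 : L ϑ₀ ≤ L 1 := Lmono hϑ₀le1
      have h2 := le_abs_self (L 1)
      have h3 := neg_abs_le a
      linarith
    set ϑ₁ : ℝ := max ϑ₀ (max 1 ((2 + a - c0 / K) / K)) with hϑ₁def
    have hϑ₁0 : ϑ₀ ≤ ϑ₁ := le_max_left _ _
    have h11 : 1 ≤ ϑ₁ := le_trans (le_max_left _ _) (le_max_right _ _)
    have hK1 : (2 + a - c0 / K) / K ≤ ϑ₁ := le_trans (le_max_right _ _) (le_max_right _ _)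
    have hf1 : 1 ≤ L ϑ₁ - 1 / ϑ₁ - a := by
      have h1 := hLg ϑ₁
      have h2 : 2 + a - c0 / K ≤ ϑ₁ * K := by
        rw [div_le_iff₀ hK] at hK1
        linarith
      have h3 : 1 / ϑ₁ ≤ 1 := by
        rw [div_le_one (by linarith)]
        exact h11
      linarith
    set f : ℝ → ℝ := fun ϑ => L ϑ - 1 / ϑ - a with hfdef
    have hcont : ContinuousOn f (Set.Icc ϑ₀ ϑ₁) := by
      refine ContinuousOn.sub (ContinuousOn.sub Lcont.continuousOn ?_) continuousOn_const
      exact ContinuousOn.div continuousOn_const continuousOn_id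
        fun x hx => (lt_of_lt_of_le hϑ₀pos hx.1).ne'
    have hmem : (0:ℝ) ∈ Set.Icc (f ϑ₀) (f ϑ₁) := by
      constructor
      · show L ϑ₀ - 1 / ϑ₀ - a ≤ 0
        linarith
      · show (0:ℝ) ≤ L ϑ₁ - 1 / ϑ₁ - a
        linarith
    obtain ⟨ϑr, hϑrmem, hϑr⟩ := intermediate_value_Icc hϑ₁0 hcont hmem
    have hϑrpos : 0 < ϑr := lt_of_lt_of_le hϑ₀pos hϑrmem.1
    have key : ∀ s t : ℝ, 0 < s → s < t → L s = 1 / s + a → L t = 1 / t + a → False := by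
      intro s t hs hst e1 e2
      have hm := Lmono hst.le
      have hd : 1 / t < 1 / s := one_div_lt_one_div_of_lt hs hst
      linarith
    refine ⟨ϑr, ⟨hϑrpos, by have : f ϑr = 0 := hϑr; simp only [hfdef] at this; linarith⟩, ?_⟩
    rintro ϑ' ⟨hϑ'pos, hϑ'root⟩
    have hϑrroot : L ϑr = 1 / ϑr + a := by
      have : f ϑr = 0 := hϑr
      simp only [hfdef] at this
      linarith
    rcases lt_trichotomy ϑ' ϑr with h | h | h
    · exact absurd (key ϑ' ϑr hϑ'pos h hϑ'root hϑrroot) not_false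
    · exact h
    · exact absurd (key ϑr ϑ' hϑrpos h hϑrroot hϑ'root) not_false
  refine ⟨exun, ?_⟩
  intro ϑm hϑm hroot
  -- ## lambdaMax Mmat = L ϑm
  have amgm : ∀ (ϑ : ℝ), 0 < ϑ → ∀ z s' : ℂ, 2 * ((starRingEnd ℂ) z * s').re
      ≤ ϑ⁻¹ * ‖z‖ ^ 2 + ϑ * ‖s'‖ ^ 2 := by
    intro ϑ hϑ z s'
    have h1 : ((starRingEnd ℂ) z * s').re ≤ ‖z‖ * ‖s'‖ := by
      calc ((starRingEnd ℂ) z * s').re ≤ ‖(starRingEnd ℂ) z * s'‖ := Complex.re_le_norm _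
        _ = ‖z‖ * ‖s'‖ := by rw [norm_mul, Complex.norm_conj]
    have h2 : 2 * (‖z‖ * ‖s'‖) * ϑ
        ≤ ‖z‖ ^ 2 + ϑ ^ 2 * ‖s'‖ ^ 2 := by
      nlinarith [sq_nonneg (‖z‖ - ϑ * ‖s'‖)]
    have h4 : ϑ⁻¹ * ‖z‖ ^ 2 + ϑ * ‖s'‖ ^ 2
        - 2 * (‖z‖ * ‖s'‖)
        = (‖z‖ ^ 2 + ϑ ^ 2 * ‖s'‖ ^ 2
          - 2 * (‖z‖ * ‖s'‖) * ϑ) / ϑ := by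
      field_simp
    have h5 : (0:ℝ) ≤ (‖z‖ ^ 2 + ϑ ^ 2 * ‖s'‖ ^ 2
          - 2 * (‖z‖ * ‖s'‖) * ϑ) / ϑ := by
      apply div_nonneg _ hϑ.le
      linarith
    linarith [h4 ▸ h5]
  have upper : ∀ x : Fin (k + 1) → ℂ, (star x ⬝ᵥ (Mmat *ᵥ x)).re
      ≤ L ϑm * ∑ i, ‖x i‖ ^ 2 := by
    intro x
    have hsplit : ∑ i, ‖x i‖ ^ 2
        = ‖x 0‖ ^ 2 + ∑ j : Fin k, ‖x j.succ‖ ^ 2 := by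
      rw [Fin.sum_univ_succ]
    have h1 := qtail x
    have h2 := amgm ϑm hϑm (x 0) (star w ⬝ᵥ fun j => x j.succ)
    have h3 := rayBound ϑm (fun j => x j.succ)
    rw [h1, hsplit, mul_add]
    set p := ‖x 0‖ ^ 2 with hpdef
    set ct := ((starRingEnd ℂ) (x 0) * (star w ⬝ᵥ fun j => x j.succ)).re with hctdef
    set q := ((star fun j => x j.succ) ⬝ᵥ (C *ᵥ fun j => x j.succ)).re with hqdef
    set r := ‖star w ⬝ᵥ fun j => x j.succ‖ ^ 2 with hrdef
    set t := ∑ j : Fin k, ‖x j.succ‖ ^ 2 with htdef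
    have h5 : L ϑm * p = ϑm⁻¹ * p + a * p := by
      rw [hroot, one_div]
      ring
    linarith [h2, h3, h5]
  have hMe : lambdaMax Mmat = L ϑm := by
    refine le_antisymm ?_ ?_
    · obtain ⟨x, hx1, hx2⟩ := lambdaMax_exists_unit hMh
      have h1 : (star x ⬝ᵥ (Mmat *ᵥ x)).re = lambdaMax Mmat := by
        rw [hx2, dotProduct_smul, smul_eq_mul, Complex.mul_re]
        simp only [Complex.ofReal_re, Complex.ofReal_im, zero_mul, sub_zero]
        rw [re_star_dot, hx1, mul_one]
      have h2 := upper x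
      rw [h1, hx1, mul_one] at h2
      exact h2
    · obtain ⟨v, hv1, hv2⟩ := attain ϑm
      set s : ℂ := star w ⬝ᵥ v with hsdef
      set x : Fin (k + 1) → ℂ := Fin.cons ((ϑm : ℂ) * s) v with hxdef
      have hx0 : x 0 = (ϑm : ℂ) * s := rfl
      have hxt : (fun j : Fin k => x j.succ) = v := by
        funext j
        rw [hxdef, Fin.cons_succ]
      have habs0 : ‖x 0‖ ^ 2 = ϑm ^ 2 * ‖s‖ ^ 2 := by
        rw [hx0, norm_mul, Complex.norm_real, Real.norm_eq_abs, abs_of_nonneg hϑm.le, mul_pow]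
      have hcross : ((starRingEnd ℂ) (x 0) * s).re = ϑm * ‖s‖ ^ 2 := by
        rw [hx0, _root_.map_mul, Complex.conj_ofReal]
        have : (ϑm : ℂ) * ((starRingEnd ℂ) s * s) = (ϑm : ℂ) * ((‖s‖ ^ 2 : ℝ) : ℂ) := by
          rw [conj_mul_self' s]
        rw [mul_assoc, this, ← Complex.ofReal_mul]
        exact Complex.ofReal_re _
      have hnsq : ∑ i, ‖x i‖ ^ 2 = ϑm ^ 2 * ‖s‖ ^ 2 + 1 := by
        rw [Fin.sum_univ_succ, habs0]
        have hss : ∑ j : Fin k, ‖x j.succ‖ ^ 2 = ∑ j, ‖v j‖ ^ 2 := by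
          refine Finset.sum_congr rfl fun j _ => ?_
          rw [hxdef, Fin.cons_succ]
        rw [hss, hv1]
      have hq : (star x ⬝ᵥ (Mmat *ᵥ x)).re = L ϑm * (ϑm ^ 2 * ‖s‖ ^ 2 + 1) := by
        rw [qtail x, habs0, hxt, ← hsdef, hcross]
        have hqC : (star v ⬝ᵥ (C *ᵥ v)).re = L ϑm - ϑm * ‖s‖ ^ 2 := by
          linarith [hv2]
        rw [hqC, hroot]
        have hexp : (1 / ϑm) * ϑm ^ 2 = ϑm := by
          field_simp
        linear_combination (-(‖s‖ ^ 2)) * hexp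
      have hray := lambdaMax_rayleigh hMh x
      rw [hq, hnsq] at hray
      have hpos : 0 < ϑm ^ 2 * ‖s‖ ^ 2 + 1 := by positivity
      exact le_of_mul_le_mul_right hray hpos
  refine ⟨hMe, ?_⟩
  intro xh hxh1 hxh2
  -- ## eigenvector part
  have hq1 : (star xh ⬝ᵥ (Mmat *ᵥ xh)).re = L ϑm := by
    rw [hxh2, dotProduct_smul, smul_eq_mul, Complex.mul_re]
    simp only [Complex.ofReal_re, Complex.ofReal_im, zero_mul, sub_zero]
    rw [re_star_dot, hxh1, mul_one, hMe]
  have h1 := qtail xh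
  have hsum : ∑ j : Fin k, ‖xh j.succ‖ ^ 2 = 1 - ‖xh 0‖ ^ 2 := by
    have h0 := hxh1
    rw [Fin.sum_univ_succ] at h0
    linarith only [h0]
  have h2 : ∀ ϑ : ℝ, 0 < ϑ →
      2 * ((starRingEnd ℂ) (xh 0) * (star w ⬝ᵥ fun j => xh j.succ)).re
        ≤ ϑ⁻¹ * ‖xh 0‖ ^ 2
          + ϑ * ‖star w ⬝ᵥ fun j => xh j.succ‖ ^ 2 :=
    fun ϑ hϑ => amgm ϑ hϑ _ _
  have h3 : ∀ ϑ : ℝ, ((star fun j => xh j.succ) ⬝ᵥ (C *ᵥ fun j => xh j.succ)).re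
      + ϑ * ‖star w ⬝ᵥ fun j => xh j.succ‖ ^ 2
      ≤ L ϑ * (1 - ‖xh 0‖ ^ 2) := by
    intro ϑ
    have h4 := rayBound ϑ (fun j => xh j.succ)
    rw [hsum] at h4
    exact h4
  set p : ℝ := ‖xh 0‖ ^ 2 with hpdef
  set ct : ℝ := ((starRingEnd ℂ) (xh 0) * (star w ⬝ᵥ fun j => xh j.succ)).re with hctdef
  set q : ℝ := ((star fun j => xh j.succ) ⬝ᵥ (C *ᵥ fun j => xh j.succ)).re with hqdef
  set r : ℝ := ‖star w ⬝ᵥ fun j => xh j.succ‖ ^ 2 with hrdef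
  have hpnn : 0 ≤ p := by rw [hpdef]; positivity
  have h1pnn : 0 ≤ 1 - p := by
    rw [← hsum]
    exact Finset.sum_nonneg fun j _ => by positivity
  have hmin : ∀ ϑ : ℝ, 0 < ϑ → L ϑm ≤ p * a + p * ϑ⁻¹ + (1 - p) * L ϑ := by
    intro ϑ hϑ
    have e1 : L ϑm = a * p + 2 * ct + q := by rw [← hq1, h1]
    have e2 := h2 ϑ hϑ
    have e3 := h3 ϑ
    nlinarith only [e1, e2, e3]
  have heq : p * a + p * ϑm⁻¹ + (1 - p) * L ϑm = L ϑm := by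
    rw [hroot, one_div]
    ring
  have hinvsq : (0:ℝ) < (ϑm ^ 2)⁻¹ := by positivity
  have hIcc : ∀ dL dR : ℝ, HasDerivWithinAt L dL (Set.Iio ϑm) ϑm →
      HasDerivWithinAt L dR (Set.Ioi ϑm) ϑm →
      p ∈ Set.Icc (dL / (dL + 1 / ϑm ^ 2)) (dR / (dR + 1 / ϑm ^ 2)) := by
    intro dL dR hdL hdR
    set h : ℝ → ℝ := fun ϑ => p * a + p * ϑ⁻¹ + (1 - p) * L ϑ with hhdef
    have hhm : h ϑm = L ϑm := heq
    have hminh : ∀ ϑ ∈ Set.Ioo (ϑm / 2) ϑm, h ϑm ≤ h ϑ := by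
      intro ϑ hϑ
      have h0 : 0 < ϑ := lt_of_lt_of_le (half_pos hϑm) hϑ.1.le
      rw [hhm]
      exact hmin ϑ h0
    have hminh' : ∀ ϑ ∈ Set.Ioo ϑm (ϑm + 1), h ϑm ≤ h ϑ := by
      intro ϑ hϑ
      have h0 : 0 < ϑ := lt_trans hϑm hϑ.1
      rw [hhm]
      exact hmin ϑ h0
    have hinvd : HasDerivAt (fun ϑ : ℝ => ϑ⁻¹) (-(ϑm ^ 2)⁻¹) ϑm := hasDerivAt_inv hϑm.ne'
    have hderL : HasDerivWithinAt h (p * -(ϑm ^ 2)⁻¹ + (1 - p) * dL) (Set.Iio ϑm) ϑm :=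
      ((hinvd.hasDerivWithinAt.const_mul p).const_add (p * a)).add (hdL.const_mul (1 - p))
    have hderR : HasDerivWithinAt h (p * -(ϑm ^ 2)⁻¹ + (1 - p) * dR) (Set.Ioi ϑm) ϑm :=
      ((hinvd.hasDerivWithinAt.const_mul p).const_add (p * a)).add (hdR.const_mul (1 - p))
    have hd1 : p * -(ϑm ^ 2)⁻¹ + (1 - p) * dL ≤ 0 :=
      deriv_left_nonpos (half_lt_self hϑm) hderL hminh
    have hd2 : 0 ≤ p * -(ϑm ^ 2)⁻¹ + (1 - p) * dR :=
      deriv_right_nonneg (lt_add_one ϑm) hderR hminh'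
    have hdL0 : 0 ≤ dL :=
      deriv_left_nonneg (sub_one_lt ϑm) hdL fun x hx => Lmono hx.2.le
    have hplt : p < 1 := by
      by_contra hcon
      have hp1 : p = 1 := le_antisymm (by linarith only [h1pnn]) (not_lt.1 hcon)
      rw [hp1] at hd2
      norm_num at hd2
      linarith only [hd2, hϑm]
    have hdR0 : 0 ≤ dR := by
      by_contra hcon
      push_neg at hcon
      have : (1 - p) * dR < 0 := mul_neg_of_pos_of_neg (by linarith only [hplt]) hcon
      nlinarith only [this, hd2, mul_nonneg hpnn hinvsq.le]
    constructor
    · rw [div_le_iff₀ (by rw [one_div]; linarith only [hdL0, hinvsq]), one_div]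
      nlinarith only [hd1]
    · rw [le_div_iff₀ (by rw [one_div]; linarith only [hdR0, hinvsq]), one_div]
      nlinarith only [hd2]
  refine ⟨hIcc, ?_⟩
  intro d hd
  have hb := hIcc d d hd.hasDerivWithinAt hd.hasDerivWithinAt
  exact le_antisymm hb.2 hb.1

end
end

section
/- Let A₁ ∈ ℂ^m be a unit vector, let B ∈ ℂ^{m×(m−1)} be such that [A₁, B] is unitary, let T = Diag(T₁,…,T_m) be real diagonal with sorted entries T_{(1)} ≥ T_{(2)} ≥ … ≥ T_{(m)}, let ϑ ≥ 0, and set E(ϑ) = B^H (T + ϑ T A₁ (T A₁)^H) B, an (m−1)×(m−1) Hermitian matrix with eigenvalues λ₁(E(ϑ)) ≥ … ≥ λ_{m−1}(E(ϑ)). Then the eigenvalues of E(ϑ) interlace with the T_{(i)}: λ_i(E(ϑ)) ≤ T_{(i−1)} for all 2 ≤ i ≤ m−1, and λ_i(E(ϑ)) ≥ T_{(i+1)} for all 1 ≤ i ≤ m−1. -/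
open Matrix

noncomputable section

namespace Stmt11Aux

/-- quadratic form of a matrix -/
def q {n : ℕ} (A : Matrix (Fin n) (Fin n) ℂ) (x : Fin n → ℂ) : ℝ := (star x ⬝ᵥ (A *ᵥ x)).re

/-- squared norm -/
def sn {n : ℕ} (x : Fin n → ℂ) : ℝ := (star x ⬝ᵥ x).re

lemma sn_eq {n : ℕ} (x : Fin n → ℂ) : sn x = ∑ i, Complex.normSq (x i) := by
  simp [sn, dotProduct, Complex.normSq_apply]

lemma sn_pos {n : ℕ} {x : Fin n → ℂ} (hx : x ≠ 0) : 0 < sn x := by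
  rw [sn_eq]
  obtain ⟨i, hi⟩ : ∃ i, x i ≠ 0 := by
    by_contra h
    push_neg at h
    exact hx (funext h)
  exact Finset.sum_pos' (fun j _ => Complex.normSq_nonneg _)
    ⟨i, Finset.mem_univ i, Complex.normSq_pos.2 hi⟩

lemma sumDot {n m : ℕ} (f : Fin m → Fin n → ℂ) (y : Fin n → ℂ) :
    (∑ a, f a) ⬝ᵥ y = ∑ a, f a ⬝ᵥ y := by
  simp only [dotProduct, Finset.sum_apply, Finset.sum_mul]
  exact Finset.sum_comm

lemma dotSum {n m : ℕ} (x : Fin n → ℂ) (g : Fin m → Fin n → ℂ) :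
    x ⬝ᵥ (∑ a, g a) = ∑ a, x ⬝ᵥ g a := by
  simp only [dotProduct, Finset.sum_apply, Finset.mul_sum]
  exact Finset.sum_comm

lemma dot_expand {n m : ℕ} (v : Fin m → Fin n → ℂ)
    (hv : ∀ a b, star (v a) ⬝ᵥ v b = if a = b then 1 else 0)
    (cc d : Fin m → ℂ) :
    star (∑ a, cc a • v a) ⬝ᵥ (∑ b, d b • v b) = ∑ a, (starRingEnd ℂ) (cc a) * d a := by
  rw [star_sum, sumDot]
  refine Finset.sum_congr rfl fun a _ => ?_
  rw [star_smul, smul_dotProduct, dotSum]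
  have : ∀ b, star (v a) ⬝ᵥ d b • v b = d b * (if a = b then 1 else 0) := by
    intro b; rw [dotProduct_smul, hv]; simp
  simp only [this]
  rw [Finset.sum_mul_boole]
  simp [mul_comm]

theorem span_spec {n m : ℕ} (A : Matrix (Fin n) (Fin n) ℂ) (v : Fin m → Fin n → ℂ)
    (hv : ∀ a b, star (v a) ⬝ᵥ v b = if a = b then 1 else 0)
    (r : Fin m → ℝ) (hAv : ∀ a, A *ᵥ v a = (r a : ℂ) • v a) :
    ∃ S : Submodule ℂ (Fin n → ℂ), Module.finrank ℂ S = m ∧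
      ∀ x ∈ S, ∃ c : Fin m → ℝ, (∀ a, 0 ≤ c a) ∧ q A x = ∑ a, r a * c a ∧ sn x = ∑ a, c a := by
  have hli : LinearIndependent ℂ v := by
    rw [Fintype.linearIndependent_iff]
    intro g hg b
    have h1 : star (v b) ⬝ᵥ (∑ a, g a • v a) = g b := by
      rw [dotSum]
      have : ∀ a, star (v b) ⬝ᵥ g a • v a = g a * (if b = a then 1 else 0) := by
        intro a; rw [dotProduct_smul, hv]; simp
      simp only [this]
      rw [Finset.sum_mul_boole]; simp
    rw [hg] at h1
    simpa using h1.symm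
  refine ⟨Submodule.span ℂ (Set.range v), ?_, ?_⟩
  · rw [finrank_span_eq_card hli, Fintype.card_fin]
  intro x hx
  obtain ⟨cc, hcc⟩ := Submodule.mem_span_range_iff_exists_fun ℂ |>.1 hx
  refine ⟨fun a => Complex.normSq (cc a), fun a => Complex.normSq_nonneg _, ?_, ?_⟩
  · have hAx : A *ᵥ x = ∑ a, (cc a * (r a : ℂ)) • v a := by
      rw [← hcc, ← Matrix.mulVecLin_apply, map_sum]
      refine Finset.sum_congr rfl fun a _ => ?_
      rw [LinearMap.map_smul, Matrix.mulVecLin_apply, hAv, smul_smul]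
    rw [q, hAx, ← hcc, dot_expand v hv]
    have : ∀ a, (starRingEnd ℂ) (cc a) * (cc a * (r a : ℂ)) =
        ((Complex.normSq (cc a) * r a : ℝ) : ℂ) := by
      intro a
      rw [← mul_assoc, ← Complex.normSq_eq_conj_mul_self]
      push_cast; ring
    simp only [this]
    rw [← Complex.ofReal_sum]
    simp only [Complex.ofReal_re]
    exact Finset.sum_congr rfl fun a _ => mul_comm _ _
  · have : x = ∑ b, cc b • v b := hcc.symm
    rw [sn, this, dot_expand v hv]
    have h2 : ∀ a, (starRingEnd ℂ) (cc a) * cc a = ((Complex.normSq (cc a) : ℝ) : ℂ) := by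
      intro a; rw [← Complex.normSq_eq_conj_mul_self]
    simp only [h2]
    rw [← Complex.ofReal_sum, Complex.ofReal_re]

theorem span_ge {n m : ℕ} (A : Matrix (Fin n) (Fin n) ℂ) (v : Fin m → Fin n → ℂ)
    (hv : ∀ a b, star (v a) ⬝ᵥ v b = if a = b then 1 else 0)
    (r : Fin m → ℝ) (hAv : ∀ a, A *ᵥ v a = (r a : ℂ) • v a) (d : ℝ) (hd : ∀ a, d ≤ r a) :
    ∃ S : Submodule ℂ (Fin n → ℂ), Module.finrank ℂ S = m ∧ ∀ x ∈ S, d * sn x ≤ q A x := by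
  obtain ⟨S, hS, hSx⟩ := span_spec A v hv r hAv
  refine ⟨S, hS, fun x hx => ?_⟩
  obtain ⟨c, hc0, hq, hsn⟩ := hSx x hx
  rw [hq, hsn, Finset.mul_sum]
  exact Finset.sum_le_sum fun a _ => mul_le_mul_of_nonneg_right (hd a) (hc0 a)

theorem span_le {n m : ℕ} (A : Matrix (Fin n) (Fin n) ℂ) (v : Fin m → Fin n → ℂ)
    (hv : ∀ a b, star (v a) ⬝ᵥ v b = if a = b then 1 else 0)
    (r : Fin m → ℝ) (hAv : ∀ a, A *ᵥ v a = (r a : ℂ) • v a) (d : ℝ) (hd : ∀ a, r a ≤ d) :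
    ∃ S : Submodule ℂ (Fin n → ℂ), Module.finrank ℂ S = m ∧ ∀ x ∈ S, q A x ≤ d * sn x := by
  obtain ⟨S, hS, hSx⟩ := span_spec A v hv r hAv
  refine ⟨S, hS, fun x hx => ?_⟩
  obtain ⟨c, hc0, hq, hsn⟩ := hSx x hx
  rw [hq, hsn, Finset.mul_sum]
  exact Finset.sum_le_sum fun a _ => mul_le_mul_of_nonneg_right (hd a) (hc0 a)

lemma finrank_inf {n : ℕ} (S T : Submodule ℂ (Fin n → ℂ)) :
    Module.finrank ℂ S + Module.finrank ℂ T ≤ Module.finrank ℂ ↥(S ⊓ T) + n := by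
  have h1 := Submodule.finrank_sup_add_finrank_inf_eq S T
  have h2 : Module.finrank ℂ ↥(S ⊔ T) ≤ n := by
    have := Submodule.finrank_le (S ⊔ T)
    rwa [Module.finrank_pi, Fintype.card_fin] at this
  omega

theorem comp {n : ℕ} (A : Matrix (Fin n) (Fin n) ℂ) (S T : Submodule ℂ (Fin n → ℂ)) (c d : ℝ)
    (hdim : n < Module.finrank ℂ S + Module.finrank ℂ T)
    (hS : ∀ x ∈ S, q A x ≤ c * sn x) (hT : ∀ x ∈ T, d * sn x ≤ q A x) : d ≤ c := by
  have hpos : 0 < Module.finrank ℂ ↥(S ⊓ T) := by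
    have := finrank_inf S T; omega
  have : Nontrivial ↥(S ⊓ T) := Module.finrank_pos_iff.mp hpos
  obtain ⟨y, hy⟩ := exists_ne (0 : ↥(S ⊓ T))
  have hx0 : (y : Fin n → ℂ) ≠ 0 := fun h => hy (Subtype.ext h)
  have hxS : (y : Fin n → ℂ) ∈ S := y.2.1
  have hxT : (y : Fin n → ℂ) ∈ T := y.2.2
  have h1 := hS _ hxS
  have h2 := hT _ hxT
  have h3 : d * sn (y : Fin n → ℂ) ≤ c * sn (y : Fin n → ℂ) := le_trans h2 h1
  exact le_of_mul_le_mul_right h3 (sn_pos hx0)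

lemma transfer_q {n p : ℕ} (B : Matrix (Fin n) (Fin p) ℂ) (M : Matrix (Fin n) (Fin n) ℂ)
    (x : Fin p → ℂ) :
    star (B *ᵥ x) ⬝ᵥ (M *ᵥ (B *ᵥ x)) = star x ⬝ᵥ ((Bᴴ * M * B) *ᵥ x) := by
  rw [star_mulVec, mulVec_mulVec, dotProduct_mulVec, dotProduct_mulVec, vecMul_vecMul,
    ← Matrix.mul_assoc]

lemma transfer_sn {n p : ℕ} (B : Matrix (Fin n) (Fin p) ℂ) (hBB : Bᴴ * B = 1)
    (x : Fin p → ℂ) : star (B *ᵥ x) ⬝ᵥ (B *ᵥ x) = star x ⬝ᵥ x := by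
  rw [star_mulVec, dotProduct_mulVec, vecMul_vecMul, hBB, vecMul_one]

lemma map_q {n p : ℕ} (B : Matrix (Fin n) (Fin p) ℂ) (hBB : Bᴴ * B = 1)
    (M : Matrix (Fin n) (Fin n) ℂ) (S₀ : Submodule ℂ (Fin p → ℂ)) :
    ∃ S : Submodule ℂ (Fin n → ℂ), Module.finrank ℂ S = Module.finrank ℂ S₀ ∧
      ∀ y ∈ S, ∃ x ∈ S₀, q M y = q (Bᴴ * M * B) x ∧ sn y = sn x := by
  have hinj : Function.Injective (Matrix.mulVecLin B) := by
    intro a b hab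
    have h1 : Bᴴ *ᵥ (B *ᵥ a) = Bᴴ *ᵥ (B *ᵥ b) := by
      simp only [Matrix.mulVecLin_apply] at hab; rw [hab]
    rwa [mulVec_mulVec, mulVec_mulVec, hBB, one_mulVec, one_mulVec] at h1
  refine ⟨S₀.map (Matrix.mulVecLin B), ?_, ?_⟩
  · exact (LinearEquiv.finrank_eq (Submodule.equivMapOfInjective _ hinj S₀)).symm
  intro y hy
  obtain ⟨x, hx, hxy⟩ := hy
  refine ⟨x, hx, ?_, ?_⟩
  · rw [← hxy, Matrix.mulVecLin_apply, q, q, transfer_q]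
  · rw [← hxy, Matrix.mulVecLin_apply, sn, sn, transfer_sn B hBB]

lemma ortho_comp {p m n : ℕ} {v : Fin p → Fin n → ℂ}
    (hv : ∀ a b, star (v a) ⬝ᵥ v b = if a = b then 1 else 0)
    {e : Fin m → Fin p} (he : Function.Injective e) :
    ∀ a b, star (v (e a)) ⬝ᵥ v (e b) = if a = b then 1 else 0 := by
  intro a b
  rw [hv]
  simp [he.eq_iff]

lemma dot_conj {n : ℕ} (x y : Fin n → ℂ) :
    star x ⬝ᵥ y = (starRingEnd ℂ) (star y ⬝ᵥ x) := by
  simp only [dotProduct, map_sum]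
  refine Finset.sum_congr rfl fun i _ => ?_
  simp only [Pi.star_apply]
  rw [RCLike.star_def, _root_.map_mul, Complex.conj_conj, mul_comm]

lemma vecMulVec_mulVec' {n : ℕ} (u w x : Fin n → ℂ) :
    vecMulVec u w *ᵥ x = (w ⬝ᵥ x) • u := by
  funext i
  simp only [mulVec, vecMulVec_apply, dotProduct, Pi.smul_apply, smul_eq_mul,
    Finset.sum_mul, Finset.mul_sum]
  exact Finset.sum_congr rfl fun j _ => by ring

lemma q_rank_one {n : ℕ} (D : Matrix (Fin n) (Fin n) ℂ) (vc : Fin n → ℂ) (ϑ : ℝ)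
    (x : Fin n → ℂ) :
    q (D + (ϑ : ℂ) • vecMulVec vc (star vc)) x
      = q D x + ϑ * Complex.normSq (star vc ⬝ᵥ x) := by
  rw [q, add_mulVec, dotProduct_add, Complex.add_re, ← q]
  congr 1
  rw [smul_mulVec, vecMulVec_mulVec', dotProduct_smul, smul_eq_mul, dotProduct_smul,
    smul_eq_mul]
  rw [dot_conj x vc]
  rw [Complex.mul_conj, ← Complex.ofReal_mul, Complex.ofReal_re]

lemma exists_perp {n : ℕ} (w : Fin n → ℂ) :
    ∃ V : Submodule ℂ (Fin n → ℂ), n ≤ Module.finrank ℂ V + 1 ∧ ∀ x ∈ V, w ⬝ᵥ x = 0 := by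
  let f : (Fin n → ℂ) →ₗ[ℂ] ℂ :=
    { toFun := fun x => w ⬝ᵥ x
      map_add' := fun a b => dotProduct_add w a b
      map_smul' := fun c x => by simp [dotProduct_smul] }
  refine ⟨LinearMap.ker f, ?_, fun x hx => hx⟩
  have h1 := LinearMap.finrank_range_add_finrank_ker f
  rw [Module.finrank_pi, Fintype.card_fin] at h1
  have h2 : Module.finrank ℂ (LinearMap.range f) ≤ 1 := by
    have := Submodule.finrank_le (LinearMap.range f)
    rwa [Module.finrank_self] at this
  omega

lemma star_single {n : ℕ} (a : Fin n) :
    star (Pi.single a 1 : Fin n → ℂ) = Pi.single a 1 := by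
  funext i
  by_cases h : i = a <;> simp [Pi.single_apply, h]

lemma single_ortho {n : ℕ} (a b : Fin n) :
    star (Pi.single a 1 : Fin n → ℂ) ⬝ᵥ (Pi.single b 1 : Fin n → ℂ) = if a = b then 1 else 0 := by
  rw [star_single, dotProduct_single, Pi.single_apply, mul_one]
  simp [eq_comm]

lemma single_eig {n : ℕ} (T : Fin n → ℝ) (j : Fin n) :
    Matrix.diagonal (fun i => (T i : ℂ)) *ᵥ (Pi.single j 1 : Fin n → ℂ)
      = (T j : ℂ) • (Pi.single j 1 : Fin n → ℂ) := by
  rw [diagonal_mulVec_single]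
  funext i
  by_cases h : i = j <;> simp [Pi.single_apply, h]

end Stmt11Aux

open Stmt11Aux in

/-- For a unit vector `A₁`, `B` with `[A₁, B]` unitary, real diagonal `T`
and `ϑ ≥ 0`, the eigenvalues (in non-increasing order `μ`) of
`E(ϑ) = Bᴴ(T + ϑ T A₁ (T A₁)ᴴ)B` interlace the sorted diagonal entries `Ts` of `T`:
`λ_i(E(ϑ)) ≤ T_{(i-1)}` for `i ≥ 2` and `λ_i(E(ϑ)) ≥ T_{(i+1)}` for all `i`. -/
theorem stmt11 (k : ℕ) (A₁ : Fin (k + 1) → ℂ) (B : Matrix (Fin (k + 1)) (Fin k) ℂ)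
    (hA1 : ∑ i, ‖A₁ i‖ ^ 2 = 1)
    (hO : (Matrix.of fun i => Fin.cons (A₁ i) (B i)) ∈ Matrix.unitaryGroup (Fin (k + 1)) ℂ)
    (T : Fin (k + 1) → ℝ) (ϑ : ℝ) (hϑ : 0 ≤ ϑ)
    (E : Matrix (Fin k) (Fin k) ℂ)
    (hE : E = Bᴴ * (Matrix.diagonal (fun i => (T i : ℂ)) +
      (ϑ : ℂ) • Matrix.vecMulVec (fun i => (T i : ℂ) * A₁ i)
        (star (fun i => (T i : ℂ) * A₁ i))) * B)
    (hEh : E.IsHermitian)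
    (μ : Fin k → ℝ) (σ : Equiv.Perm (Fin k)) (hμ : μ = hEh.eigenvalues ∘ σ) (hμa : Antitone μ)
    (Ts : Fin (k + 1) → ℝ) (π : Equiv.Perm (Fin (k + 1))) (hTs : Ts = T ∘ π)
    (hTsa : Antitone Ts) :
    (∀ i : Fin k, 1 ≤ (i : ℕ) →
      μ i ≤ Ts ⟨(i : ℕ) - 1, Nat.lt_succ_of_lt (Nat.lt_of_le_of_lt (Nat.sub_le _ _) i.isLt)⟩) ∧
    ∀ i : Fin k, Ts ⟨(i : ℕ) + 1, Nat.succ_lt_succ i.isLt⟩ ≤ μ i := by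
  classical
  open Stmt11Aux in
  set vc : Fin (k + 1) → ℂ := fun i => (T i : ℂ) * A₁ i with hvc
  set D : Matrix (Fin (k + 1)) (Fin (k + 1)) ℂ := Matrix.diagonal fun i => (T i : ℂ) with hD
  set M : Matrix (Fin (k + 1)) (Fin (k + 1)) ℂ :=
    D + (ϑ : ℂ) • Matrix.vecMulVec vc (star vc) with hM
  have hE' : E = Bᴴ * M * B := hE
  have hBB : Bᴴ * B = 1 := by
    have hU := Matrix.mem_unitaryGroup_iff'.mp hO
    ext a b
    have h := Matrix.ext_iff.mpr hU a.succ b.succ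
    simp only [Matrix.mul_apply, Matrix.star_apply, Matrix.of_apply, Fin.cons_succ,
      Matrix.one_apply, Fin.succ_inj] at h
    simpa [Matrix.mul_apply, Matrix.conjTranspose_apply, Matrix.one_apply] using h
  set u : Fin k → Fin k → ℂ :=
    fun j => (WithLp.equiv 2 (Fin k → ℂ)) (hEh.eigenvectorBasis j) with hu
  have hu_ortho : ∀ a b : Fin k, star (u a) ⬝ᵥ u b = if a = b then 1 else 0 := by
    intro a b
    have h := orthonormal_iff_ite.mp hEh.eigenvectorBasis.orthonormal a b
    rw [EuclideanSpace.inner_eq_star_dotProduct, dotProduct_comm] at h; exact h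
  have hu_eig : ∀ a, E *ᵥ u a = ((hEh.eigenvalues a : ℝ) : ℂ) • u a := by
    intro a
    have h2 : (hEh.eigenvalues a) • u a = ((hEh.eigenvalues a : ℝ) : ℂ) • u a := by
      funext i; simp [Pi.smul_apply, Complex.real_smul, smul_eq_mul]
    rw [← h2]
    exact hEh.mulVec_eigenvectorBasis a
  have hμval : ∀ m : Fin k, hEh.eigenvalues (σ m) = μ m := by
    intro m; rw [hμ]; rfl
  constructor
  · -- Part 1 : μ i ≤ Ts (i-1) for i ≥ 1
    intro i h1
    -- E top family : span of top (i+1) eigenvectors, q E ≥ μ i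
    have hik := i.isLt
    have he1inj : Function.Injective
        (fun j : Fin ((i : ℕ) + 1) => σ ⟨j.1, by have := j.isLt; omega⟩) := by
      intro a b hab
      have h2 := σ.injective hab
      have h3 : a.1 = b.1 := by
        have := congrArg Fin.val h2
        simpa using this
      exact Fin.ext h3
    obtain ⟨S₀, hS₀r, hS₀⟩ := span_ge E
      (u ∘ fun j : Fin ((i : ℕ) + 1) => σ ⟨j.1, by have := j.isLt; omega⟩)
      (ortho_comp hu_ortho he1inj)
      (fun j => hEh.eigenvalues (σ ⟨j.1, by have := j.isLt; omega⟩))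
      (fun j => hu_eig _) (μ i)
      (by
        intro j
        show μ i ≤ hEh.eigenvalues (σ ⟨j.1, by have := j.isLt; omega⟩)
        rw [hμval]
        exact hμa (by rw [Fin.le_def]; have := j.isLt; simp; omega))
    obtain ⟨Tsub, hTr, hTmem⟩ := map_q B hBB M S₀
    have hTq : ∀ y ∈ Tsub, μ i * sn y ≤ q M y := by
      intro y hy
      obtain ⟨x, hx, hq2, hsn2⟩ := hTmem y hy
      rw [hq2, hsn2, ← hE']
      exact hS₀ x hx
    -- D bottom family at index i-1
    set a0 : ℕ := (i : ℕ) - 1 with ha0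
    have hedinj : Function.Injective
        (fun j : Fin (k + 1 - a0) => π ⟨a0 + j.1, by have := j.isLt; omega⟩) := by
      intro a b hab
      have h2 := π.injective hab
      have h3 : a0 + a.1 = a0 + b.1 := by
        have := congrArg Fin.val h2
        simpa using this
      exact Fin.ext (by omega)
    obtain ⟨S₁, hS₁r, hS₁⟩ := span_le D
      (fun j : Fin (k + 1 - a0) => Pi.single (π ⟨a0 + j.1, by have := j.isLt; omega⟩) 1)
      (fun a b => ortho_comp (fun a b => single_ortho a b) hedinj a b)
      (fun j => T (π ⟨a0 + j.1, by have := j.isLt; omega⟩))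
      (fun j => single_eig T _)
      (Ts ⟨a0, by omega⟩)
      (by
        intro j
        show T (π ⟨a0 + j.1, by have := j.isLt; omega⟩) ≤ Ts ⟨a0, by omega⟩
        have h4 : T (π ⟨a0 + j.1, by have := j.isLt; omega⟩)
            = Ts ⟨a0 + j.1, by have := j.isLt; omega⟩ := by rw [hTs]; rfl
        rw [h4]
        exact hTsa (by rw [Fin.mk_le_mk]; omega))
    obtain ⟨V, hVr, hV⟩ := exists_perp (star vc)
    have hS₂q : ∀ x ∈ S₁ ⊓ V, q M x ≤ Ts ⟨a0, by omega⟩ * sn x := by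
      intro x hx
      have h5 : q M x = q D x + ϑ * Complex.normSq (star vc ⬝ᵥ x) := q_rank_one D vc ϑ x
      rw [h5, hV x hx.2]
      simpa using hS₁ x hx.1
    have hdim : k + 1 < Module.finrank ℂ ↥(S₁ ⊓ V) + Module.finrank ℂ ↥Tsub := by
      have h6 := finrank_inf S₁ V
      rw [hS₁r] at h6
      rw [hTr, hS₀r]
      omega
    exact comp M (S₁ ⊓ V) Tsub (Ts ⟨a0, by omega⟩) (μ i) hdim hS₂q hTq
  · -- Part 2 : Ts (i+1) ≤ μ i
    intro i
    have hik := i.isLt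
    -- E bottom family
    have he2inj : Function.Injective
        (fun j : Fin (k - (i : ℕ)) => σ ⟨(i : ℕ) + j.1, by have := j.isLt; omega⟩) := by
      intro a b hab
      have h2 := σ.injective hab
      have h3 : (i : ℕ) + a.1 = (i : ℕ) + b.1 := by
        have := congrArg Fin.val h2
        simpa using this
      exact Fin.ext (by omega)
    obtain ⟨S₀, hS₀r, hS₀⟩ := span_le E
      (u ∘ fun j : Fin (k - (i : ℕ)) => σ ⟨(i : ℕ) + j.1, by have := j.isLt; omega⟩)
      (ortho_comp hu_ortho he2inj)
      (fun j => hEh.eigenvalues (σ ⟨(i : ℕ) + j.1, by have := j.isLt; omega⟩))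
      (fun j => hu_eig _) (μ i)
      (by
        intro j
        show hEh.eigenvalues (σ ⟨(i : ℕ) + j.1, by have := j.isLt; omega⟩) ≤ μ i
        rw [hμval]
        exact hμa (by rw [Fin.le_def]; simp))
    obtain ⟨Ssub, hSr, hSmem⟩ := map_q B hBB M S₀
    have hSq : ∀ y ∈ Ssub, q M y ≤ μ i * sn y := by
      intro y hy
      obtain ⟨x, hx, hq2, hsn2⟩ := hSmem y hy
      rw [hq2, hsn2, ← hE']
      exact hS₀ x hx
    -- D top family of size i+2
    have hedinj : Function.Injective
        (fun j : Fin ((i : ℕ) + 2) => π ⟨j.1, by have := j.isLt; omega⟩) := by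
      intro a b hab
      have h2 := π.injective hab
      have h3 : a.1 = b.1 := by
        have := congrArg Fin.val h2
        simpa using this
      exact Fin.ext h3
    obtain ⟨S₁, hS₁r, hS₁⟩ := span_ge D
      (fun j : Fin ((i : ℕ) + 2) => Pi.single (π ⟨j.1, by have := j.isLt; omega⟩) 1)
      (fun a b => ortho_comp (fun a b => single_ortho a b) hedinj a b)
      (fun j => T (π ⟨j.1, by have := j.isLt; omega⟩))
      (fun j => single_eig T _)
      (Ts ⟨(i : ℕ) + 1, by omega⟩)
      (by
        intro j
        show Ts ⟨(i : ℕ) + 1, by omega⟩ ≤ T (π ⟨j.1, by have := j.isLt; omega⟩)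
        have h4 : T (π ⟨j.1, by have := j.isLt; omega⟩)
            = Ts ⟨j.1, by have := j.isLt; omega⟩ := by rw [hTs]; rfl
        rw [h4]
        exact hTsa (by rw [Fin.mk_le_mk]; have := j.isLt; omega))
    have hTq : ∀ x ∈ S₁, Ts ⟨(i : ℕ) + 1, by omega⟩ * sn x ≤ q M x := by
      intro x hx
      have h5 : q M x = q D x + ϑ * Complex.normSq (star vc ⬝ᵥ x) := q_rank_one D vc ϑ x
      have h6 := hS₁ x hx
      nlinarith [Complex.normSq_nonneg (star vc ⬝ᵥ x)]
    have hdim : k + 1 < Module.finrank ℂ ↥Ssub + Module.finrank ℂ ↥S₁ := by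
      rw [hSr, hS₀r, hS₁r]
      omega
    exact comp M Ssub S₁ (μ i) (Ts ⟨(i : ℕ) + 1, by omega⟩) hdim hSq hTq


end
end

section
/- Let A₁ ∈ ℂ^m be a unit vector, let B ∈ ℂ^{m×(m−1)} be such that [A₁, B] is unitary, let T = Diag(T₁,…,T_m) be real diagonal with largest entry T_{(1)}, let ϑ > 0, and set E(ϑ) = B^H (T + ϑ T A₁ (T A₁)^H) B and a_m = A₁^H T A₁. Then E(ϑ) has at most one eigenvalue strictly greater than T_{(1)}, and any such eigenvalue is the unique solution λ of Q_m(λ) = 1/(λ − a_m − 1/ϑ) in the region λ > max(a_m + 1/ϑ, T_{(1)}), where Q_m(λ) = Σ_{i=1}^m |A_{1i}|²/(λ − T_i). -/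
open Matrix

noncomputable section

lemma sym_identity {m : ℕ} (p u v : Fin m → ℝ) (hp : ∑ i, p i = 1) :
    ∑ i, ∑ j, p i * p j * ((u i - u j) * (v i - v j)) =
      2 * (∑ i, p i * (u i * v i)) - 2 * ((∑ i, p i * u i) * (∑ i, p i * v i)) := by
  have h : ∀ i : Fin m, ∑ j, p i * p j * ((u i - u j) * (v i - v j)) =
      (p i * (u i * v i)) * (∑ j, p j) - (p i * u i) * (∑ j, p j * v j)
        - (p i * v i) * (∑ j, p j * u j) + p i * (∑ j, p j * (u j * v j)) := by
    intro i
    rw [Finset.mul_sum, Finset.mul_sum, Finset.mul_sum, Finset.mul_sum,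
      ← Finset.sum_sub_distrib, ← Finset.sum_sub_distrib, ← Finset.sum_add_distrib]
    exact Finset.sum_congr rfl fun j _ => by ring
  simp_rw [h, hp]
  rw [Finset.sum_add_distrib, Finset.sum_sub_distrib, Finset.sum_sub_distrib,
    ← Finset.sum_mul, ← Finset.sum_mul, ← Finset.sum_mul, ← Finset.sum_mul, hp]
  ring

lemma unique_aux {m : ℕ} (p T : Fin m → ℝ) (hp0 : ∀ i, 0 ≤ p i) (hp : ∑ i, p i = 1)
    (am ϑ : ℝ) (hϑ : 0 < ϑ) (ham : am = ∑ i, T i * p i)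
    (lam mu : ℝ) (hlam : ∀ i, T i < lam) (hmu : ∀ i, T i < mu) (hlt : mu < lam)
    (h1 : (∑ i, p i / (lam - T i)) * (lam - am - 1/ϑ) = 1)
    (h2 : (∑ i, p i / (mu - T i)) * (mu - am - 1/ϑ) = 1) : False := by
  have hposl : ∀ i, 0 < lam - T i := fun i => sub_pos.2 (hlam i)
  have hposm : ∀ i, 0 < mu - T i := fun i => sub_pos.2 (hmu i)
  obtain ⟨i0, hi0⟩ : ∃ i, 0 < p i := by
    by_contra h; push_neg at h
    have h0 : ∀ i, p i = 0 := fun i => le_antisymm (h i) (hp0 i)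
    simp [h0] at hp
  set Sl := ∑ i, p i / (lam - T i) with hSldef
  set Sm := ∑ i, p i / (mu - T i) with hSmdef
  have hSl : 0 < Sl := Finset.sum_pos' (fun i _ => div_nonneg (hp0 i) (hposl i).le)
    ⟨i0, Finset.mem_univ _, div_pos hi0 (hposl i0)⟩
  have hSm : 0 < Sm := Finset.sum_pos' (fun i _ => div_nonneg (hp0 i) (hposm i).le)
    ⟨i0, Finset.mem_univ _, div_pos hi0 (hposm i0)⟩
  set u : Fin m → ℝ := fun i => 1 / (lam - T i) with hu
  set v : Fin m → ℝ := fun i => 1 / (mu - T i) with hv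
  have hSlu : Sl = ∑ i, p i * u i := by
    rw [hSldef]; exact Finset.sum_congr rfl fun i _ => by rw [hu]; ring
  have hSmv : Sm = ∑ i, p i * v i := by
    rw [hSmdef]; exact Finset.sum_congr rfl fun i _ => by rw [hv]; ring
  set C := ∑ i, p i * (u i * v i) with hC
  have hdiff : Sm - Sl = (lam - mu) * C := by
    rw [hSldef, hSmdef, hC, Finset.mul_sum, ← Finset.sum_sub_distrib]
    refine Finset.sum_congr rfl fun i _ => ?_
    rw [hu, hv]
    field_simp [(hposl i).ne', (hposm i).ne']
    ring
  have e1 : lam - am - 1/ϑ = 1/Sl := by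
    rw [eq_div_iff hSl.ne']; linear_combination h1
  have e2 : mu - am - 1/ϑ = 1/Sm := by
    rw [eq_div_iff hSm.ne']; linear_combination h2
  have hlmne : lam - mu ≠ 0 := by intro h; linarith
  have hsub : lam - mu = (lam - mu) * C / (Sl * Sm) := by
    rw [← hdiff]
    have : lam - mu = 1/Sl - 1/Sm := by linarith
    rw [this]; field_simp [hSl.ne', hSm.ne']
  have hCeq : C = Sl * Sm := by
    rw [eq_div_iff (by positivity : Sl * Sm ≠ 0)] at hsub
    exact (mul_left_cancel₀ hlmne hsub).symm
  have hzero : ∑ i, ∑ j, p i * p j * ((u i - u j) * (v i - v j)) = 0 := by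
    rw [sym_identity p u v hp, ← hC, ← hSlu, ← hSmv, hCeq]; ring
  have hterm : ∀ i j : Fin m, p i * p j * ((u i - u j) * (v i - v j)) =
      p i * p j * (T i - T j)^2 *
        (1/((lam - T i)*(lam - T j)*(mu - T i)*(mu - T j))) := by
    intro i j
    rw [hu, hv]
    field_simp [(hposl i).ne', (hposl j).ne', (hposm i).ne', (hposm j).ne']
    ring
  have hden : ∀ i j : Fin m, (0:ℝ) < (lam - T i)*(lam - T j)*(mu - T i)*(mu - T j) :=
    fun i j => mul_pos (mul_pos (mul_pos (hposl i) (hposl j)) (hposm i)) (hposm j)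
  have htnn : ∀ i j : Fin m, 0 ≤ p i * p j * ((u i - u j) * (v i - v j)) := by
    intro i j; rw [hterm i j]
    exact mul_nonneg (mul_nonneg (mul_nonneg (hp0 i) (hp0 j)) (sq_nonneg _))
      (le_of_lt (one_div_pos.mpr (hden i j)))
  have hallz : ∀ i j : Fin m, p i * p j * ((u i - u j) * (v i - v j)) = 0 := by
    have h1' := (Finset.sum_eq_zero_iff_of_nonneg
      (fun i _ => Finset.sum_nonneg fun j _ => htnn i j)).mp hzero
    intro i j
    exact (Finset.sum_eq_zero_iff_of_nonneg (fun j _ => htnn i j)).mp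
      (h1' i (Finset.mem_univ i)) j (Finset.mem_univ j)
  have hdeg : ∀ i j : Fin m, p i * p j * (T i - T j) = 0 := by
    intro i j
    have h0 := hallz i j
    rw [hterm i j] at h0
    have h5 : p i * p j * (T i - T j)^2 = 0 := by
      rcases mul_eq_zero.mp h0 with h | h
      · exact h
      · exact absurd h (one_div_pos.mpr (hden i j)).ne'
    rcases mul_eq_zero.mp h5 with h | h
    · rw [h]; ring
    · rw [pow_eq_zero_iff (by norm_num : 2 ≠ 0)] at h; rw [h]; ring
  have hTam : ∀ i, T i - am = ∑ j, p j * (T i - T j) := by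
    intro i
    have h6 : ∀ j, p j * (T i - T j) = T i * p j - T j * p j := fun j => by ring
    simp_rw [h6]
    rw [Finset.sum_sub_distrib, ← Finset.mul_sum, hp, mul_one, ham]
  have hD : ∑ i, (p i/(lam - T i)) * (T i - am) = 0 := by
    refine Finset.sum_eq_zero fun i _ => ?_
    rw [hTam i, Finset.mul_sum]
    refine Finset.sum_eq_zero fun j _ => ?_
    have h7 : p i / (lam - T i) * (p j * (T i - T j)) =
        p i * p j * (T i - T j) * (1/(lam - T i)) := by ring
    rw [h7, hdeg i j, zero_mul]
  have hsl1 : Sl * (lam - am) = 1 := by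
    have h8 : Sl * (lam - am) = (∑ i, p i) + ∑ i, (p i/(lam - T i)) * (T i - am) := by
      rw [hSldef, Finset.sum_mul, ← Finset.sum_add_distrib]
      refine Finset.sum_congr rfl fun i _ => ?_
      field_simp [(hposl i).ne']
      ring
    rw [h8, hp, hD]; ring
  have hz : Sl * (1/ϑ) = 0 := by linear_combination hsl1 - h1
  have hpos : 0 < Sl * (1/ϑ) := by positivity
  linarith

lemma unique_sol {m : ℕ} (p T : Fin m → ℝ) (hp0 : ∀ i, 0 ≤ p i) (hp : ∑ i, p i = 1)
    (am ϑ : ℝ) (hϑ : 0 < ϑ) (ham : am = ∑ i, T i * p i)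
    (lam mu : ℝ) (hlam : ∀ i, T i < lam) (hmu : ∀ i, T i < mu)
    (h1 : (∑ i, p i / (lam - T i)) * (lam - am - 1/ϑ) = 1)
    (h2 : (∑ i, p i / (mu - T i)) * (mu - am - 1/ϑ) = 1) : lam = mu := by
  rcases lt_trichotomy mu lam with h | h | h
  · exact absurd (unique_aux p T hp0 hp am ϑ hϑ ham lam mu hlam hmu h h1 h2) (by simp)
  · exact h.symm
  · exact absurd (unique_aux p T hp0 hp am ϑ hϑ ham mu lam hmu hlam h h2 h1) (by simp)

/-- With `[A₁, B]` unitary, `T` real diagonal with maximal entry `T₍₁₎`,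
`ϑ > 0`, `E(ϑ) = Bᴴ(T + ϑ T A₁ (T A₁)ᴴ)B`, and `a_m = A₁ᴴ T A₁`: `E(ϑ)` has at most one
eigenvalue `> T₍₁₎`, and any such eigenvalue is the unique solution `λ` of
`Q_m(λ) = 1/(λ - a_m - 1/ϑ)` with `λ > max (a_m + 1/ϑ) T₍₁₎`, where
`Q_m(λ) = ∑ᵢ |A_{1i}|²/(λ - Tᵢ)`. -/
theorem stmt12 (k : ℕ) (A₁ : Fin (k + 1) → ℂ) (B : Matrix (Fin (k + 1)) (Fin k) ℂ)
    (hA1 : ∑ i, ‖A₁ i‖ ^ 2 = 1)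
    (hO : (Matrix.of fun i => Fin.cons (A₁ i) (B i)) ∈ Matrix.unitaryGroup (Fin (k + 1)) ℂ)
    (T : Fin (k + 1) → ℝ) (ϑ : ℝ) (hϑ : 0 < ϑ)
    (E : Matrix (Fin k) (Fin k) ℂ)
    (hE : E = Bᴴ * (Matrix.diagonal (fun i => (T i : ℂ)) +
      (ϑ : ℂ) • Matrix.vecMulVec (fun i => (T i : ℂ) * A₁ i)
        (star (fun i => (T i : ℂ) * A₁ i))) * B)
    (hEh : E.IsHermitian)
    (T1 : ℝ) (hT1 : T1 = Finset.univ.sup' Finset.univ_nonempty T)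
    (am : ℝ) (ham : am = ∑ i, T i * ‖A₁ i‖ ^ 2)
    (Qm : ℝ → ℝ) (hQm : ∀ lam, Qm lam = ∑ i, ‖A₁ i‖ ^ 2 / (lam - T i)) :
    (Finset.univ.filter (fun i => T1 < hEh.eigenvalues i)).card ≤ 1 ∧
    ∀ i : Fin k, T1 < hEh.eigenvalues i →
      max (am + 1 / ϑ) T1 < hEh.eigenvalues i ∧
      Qm (hEh.eigenvalues i) = 1 / (hEh.eigenvalues i - am - 1 / ϑ) ∧
      ∀ lam : ℝ, max (am + 1 / ϑ) T1 < lam →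
        Qm lam = 1 / (lam - am - 1 / ϑ) → lam = hEh.eigenvalues i := by
  classical
  -- weights
  set p : Fin (k+1) → ℝ := fun l => ‖A₁ l‖ ^ 2 with hpdef
  have hp0 : ∀ l, 0 ≤ p l := fun l => by rw [hpdef]; positivity
  have hpsum : ∑ l, p l = 1 := hA1
  have hamp : am = ∑ l, T l * p l := ham
  obtain ⟨i0, hi0⟩ : ∃ l, 0 < p l := by
    by_contra h; push_neg at h
    have h0 : ∀ l, p l = 0 := fun l => le_antisymm (h l) (hp0 l)
    simp [h0] at hpsum
  have hS0pos : ∀ lam : ℝ, (∀ l, T l < lam) → 0 < ∑ l, p l / (lam - T l) := by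
    intro lam hTl
    exact Finset.sum_pos' (fun l _ => div_nonneg (hp0 l) (sub_pos.2 (hTl l)).le)
      ⟨i0, Finset.mem_univ _, div_pos hi0 (sub_pos.2 (hTl i0))⟩
  have hTle : ∀ l, T l ≤ T1 := fun l => hT1 ▸ Finset.le_sup' T (Finset.mem_univ l)
  -- unitary facts
  set U : Matrix (Fin (k+1)) (Fin (k+1)) ℂ := Matrix.of fun i => Fin.cons (A₁ i) (B i) with hUdef
  have hUU : U * star U = 1 := Matrix.mem_unitaryGroup_iff.mp hO
  have hUU' : star U * U = 1 := Matrix.mem_unitaryGroup_iff'.mp hO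
  have hU0 : ∀ i, U i 0 = A₁ i := fun i => rfl
  have hUs : ∀ i j, U i (j.succ) = B i j := fun i j => rfl
  have hBHB : Bᴴ * B = 1 := by
    ext j l
    have h := congrFun (congrFun hUU' j.succ) l.succ
    simp only [Matrix.mul_apply, Matrix.star_apply, Matrix.one_apply, hUs, hU0,
      Fin.succ_inj, Matrix.conjTranspose_apply] at h ⊢
    exact h
  have colAB : ∀ j, ∑ i, (starRingEnd ℂ) (A₁ i) * B i j = 0 := by
    intro j
    have h := congrFun (congrFun hUU' 0) j.succ
    simp only [Matrix.mul_apply, Matrix.star_apply, Matrix.one_apply, hUs, hU0] at h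
    rw [if_neg (Fin.succ_ne_zero j).symm] at h
    exact h
  have hcomp : ∀ w : Fin (k+1) → ℂ, U *ᵥ (star U *ᵥ w) = w := by
    intro w
    rw [Matrix.mulVec_mulVec, hUU, Matrix.one_mulVec]
  -- conj * self
  have hconj : ∀ l, (starRingEnd ℂ) (A₁ l) * A₁ l = ((p l : ℝ) : ℂ) := by
    intro l
    rw [mul_comm, Complex.mul_conj, hpdef]
    norm_cast
    exact (Complex.sq_norm _).symm
  set vv : Fin (k+1) → ℂ := fun l => (T l : ℂ) * A₁ l with hvv
  -- main per-eigenvalue fact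
  have main : ∀ i : Fin k, T1 < hEh.eigenvalues i →
      (∀ l, T l < hEh.eigenvalues i) ∧
      (∑ l, p l / (hEh.eigenvalues i - T l)) * (hEh.eigenvalues i - am - 1/ϑ) = 1 ∧
      ∃ c β : ℂ, c ≠ 0 ∧
        (∀ l, ((hEh.eigenvalues i : ℂ) - (T l : ℂ)) * (B *ᵥ ⇑(hEh.eigenvectorBasis i)) l
            = ((ϑ:ℂ) * c * (T l : ℂ) - β) * A₁ l) ∧
        (ϑ:ℂ) * c * ((∑ l, T l * p l / (hEh.eigenvalues i - T l) : ℝ) : ℂ)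
          = β * ((∑ l, p l / (hEh.eigenvalues i - T l) : ℝ) : ℂ) := by
    intro i hgt
    set lam : ℝ := hEh.eigenvalues i with hlamdef
    have hTl : ∀ l, T l < lam := fun l => lt_of_le_of_lt (hTle l) hgt
    have hposl : ∀ l, 0 < lam - T l := fun l => sub_pos.2 (hTl l)
    have hne : ∀ l, ((lam:ℂ) - (T l:ℂ)) ≠ 0 := by
      intro l
      rw [← Complex.ofReal_sub]
      exact Complex.ofReal_ne_zero.mpr (hposl l).ne'
    set x : Fin k → ℂ := ⇑(hEh.eigenvectorBasis i) with hx
    have hxe : E *ᵥ x = (lam:ℂ) • x := by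
      have h := hEh.mulVec_eigenvectorBasis i
      rw [hx, h]; funext l; simp [Pi.smul_apply, hlamdef]
    set y : Fin (k+1) → ℂ := B *ᵥ x with hy
    set c : ℂ := ∑ l, (starRingEnd ℂ) (vv l) * y l with hc
    set M : Matrix (Fin (k+1)) (Fin (k+1)) ℂ :=
      Matrix.diagonal (fun l => (T l:ℂ)) + (ϑ:ℂ) • Matrix.vecMulVec vv (star vv) with hM
    set w : Fin (k+1) → ℂ := M *ᵥ y with hwdef
    have hw : ∀ l, w l = (T l : ℂ) * y l + (ϑ:ℂ) * c * vv l := by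
      intro l
      rw [hwdef, hM, Matrix.add_mulVec, Pi.add_apply, Matrix.mulVec_diagonal,
        Matrix.smul_mulVec, Pi.smul_apply, smul_eq_mul]
      have h : (Matrix.vecMulVec vv (star vv) *ᵥ y) l = vv l * c := by
        rw [hc]
        simp only [Matrix.mulVec, Matrix.vecMulVec_apply, dotProduct, Pi.star_apply]
        rw [Finset.mul_sum]
        exact Finset.sum_congr rfl fun j _ => by rw [RCLike.star_def]; ring
      rw [h]; ring
    have hBw : Bᴴ *ᵥ w = (lam:ℂ) • x := by
      rw [hwdef, hy, Matrix.mulVec_mulVec, Matrix.mulVec_mulVec, ← hE]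
      exact hxe
    set β : ℂ := ∑ l, (starRingEnd ℂ) (A₁ l) * w l with hβ
    have hkey : ∀ l, w l = β * A₁ l + (lam:ℂ) * y l := by
      intro l
      have hz0 : (star U *ᵥ w) 0 = β := by
        rw [hβ]
        simp only [Matrix.mulVec, dotProduct, Matrix.star_apply]
        exact Finset.sum_congr rfl fun i' _ => by rw [RCLike.star_def, hU0]
      have hzs : ∀ j, (star U *ᵥ w) j.succ = (lam:ℂ) * x j := by
        intro j
        have h1 : (star U *ᵥ w) j.succ = (Bᴴ *ᵥ w) j := by
          simp only [Matrix.mulVec, dotProduct, Matrix.star_apply,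
            Matrix.conjTranspose_apply]
          exact Finset.sum_congr rfl fun i' _ => by rw [hUs]
        rw [h1, hBw, Pi.smul_apply, smul_eq_mul]
      have h2 := congrFun (hcomp w) l
      rw [show (U *ᵥ (star U *ᵥ w)) l = ∑ a, U l a * (star U *ᵥ w) a from rfl] at h2
      rw [Fin.sum_univ_succ, hz0, hU0] at h2
      have h3 : ∑ j : Fin k, U l j.succ * (star U *ᵥ w) j.succ = (lam:ℂ) * y l := by
        rw [hy, show (B *ᵥ x) l = ∑ j, B l j * x j from rfl, Finset.mul_sum]
        exact Finset.sum_congr rfl fun j _ => by rw [hzs j, hUs]; ring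
      rw [h3] at h2
      linear_combination -h2
    have hyf : ∀ l, ((lam:ℂ) - (T l:ℂ)) * y l = ((ϑ:ℂ) * c * (T l:ℂ) - β) * A₁ l := by
      intro l
      have h3 := hkey l
      rw [hw l, hvv] at h3
      linear_combination -h3
    have hyl : ∀ l, y l = ((ϑ:ℂ) * c * (T l:ℂ) - β) * A₁ l / ((lam:ℂ) - (T l:ℂ)) := by
      intro l
      rw [eq_div_iff (hne l)]
      linear_combination hyf l
    have horth : ∑ l, (starRingEnd ℂ) (A₁ l) * y l = 0 := by
      rw [hy]
      have h4 : ∀ l, (starRingEnd ℂ) (A₁ l) * (B *ᵥ x) l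
          = ∑ j, ((starRingEnd ℂ) (A₁ l) * B l j) * x j := by
        intro l
        rw [show (B *ᵥ x) l = ∑ j, B l j * x j from rfl, Finset.mul_sum]
        exact Finset.sum_congr rfl fun j _ => by ring
      simp_rw [h4]
      rw [Finset.sum_comm]
      refine Finset.sum_eq_zero fun j _ => ?_
      rw [← Finset.sum_mul, colAB j, zero_mul]
    -- term expansions
    have hterm1 : ∀ l, (starRingEnd ℂ) (A₁ l) * y l
        = (ϑ:ℂ) * c * ((T l * p l / (lam - T l) : ℝ) : ℂ)
          - β * ((p l / (lam - T l) : ℝ) : ℂ) := by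
      intro l
      rw [hyl l]
      push_cast
      field_simp [hne l]
      linear_combination ((ϑ:ℂ) * c * (T l:ℂ) - β) * hconj l
    have hterm2 : ∀ l, (starRingEnd ℂ) (vv l) * y l
        = (ϑ:ℂ) * c * ((T l^2 * p l / (lam - T l) : ℝ) : ℂ)
          - β * ((T l * p l / (lam - T l) : ℝ) : ℂ) := by
      intro l
      rw [hvv]
      have h5 : (starRingEnd ℂ) ((T l:ℂ) * A₁ l) * y l
          = (T l:ℂ) * ((starRingEnd ℂ) (A₁ l) * y l) := by
        rw [_root_.map_mul, Complex.conj_ofReal]; ring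
      rw [h5, hterm1 l]
      push_cast
      ring
    -- the two scalar equations
    have ha : (ϑ:ℂ) * c * ((∑ l, T l * p l / (lam - T l) : ℝ) : ℂ)
        = β * ((∑ l, p l / (lam - T l) : ℝ) : ℂ) := by
      have h6 : ∑ l, ((ϑ:ℂ) * c * ((T l * p l / (lam - T l) : ℝ) : ℂ)
          - β * ((p l / (lam - T l) : ℝ) : ℂ)) = 0 := by
        rw [← Finset.sum_congr rfl fun l _ => hterm1 l]
        exact horth
      rw [Finset.sum_sub_distrib, ← Finset.mul_sum, ← Finset.mul_sum] at h6
      rw [show ((∑ l, T l * p l / (lam - T l) : ℝ) : ℂ)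
          = ∑ l, ((T l * p l / (lam - T l) : ℝ) : ℂ) from by norm_cast]
      rw [show ((∑ l, p l / (lam - T l) : ℝ) : ℂ)
          = ∑ l, ((p l / (lam - T l) : ℝ) : ℂ) from by norm_cast]
      linear_combination h6
    have hb : c = (ϑ:ℂ) * c * ((∑ l, T l^2 * p l / (lam - T l) : ℝ) : ℂ)
        - β * ((∑ l, T l * p l / (lam - T l) : ℝ) : ℂ) := by
      have h7 : ∑ l, ((ϑ:ℂ) * c * ((T l^2 * p l / (lam - T l) : ℝ) : ℂ)
          - β * ((T l * p l / (lam - T l) : ℝ) : ℂ)) = c := by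
        rw [← Finset.sum_congr rfl fun l _ => hterm2 l]
      rw [Finset.sum_sub_distrib, ← Finset.mul_sum, ← Finset.mul_sum] at h7
      rw [show ((∑ l, T l^2 * p l / (lam - T l) : ℝ) : ℂ)
          = ∑ l, ((T l^2 * p l / (lam - T l) : ℝ) : ℂ) from by norm_cast]
      rw [show ((∑ l, T l * p l / (lam - T l) : ℝ) : ℂ)
          = ∑ l, ((T l * p l / (lam - T l) : ℝ) : ℂ) from by norm_cast]
      linear_combination -h7
    -- nonvanishing of c
    have hxne : x ≠ 0 := by
      have h8 := hEh.eigenvectorBasis.orthonormal.ne_zero i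
      intro h9
      apply h8
      ext l
      exact congrFun h9 l
    have hcne : c ≠ 0 := by
      intro hc0
      have hS0c : ((∑ l, p l / (lam - T l) : ℝ) : ℂ) ≠ 0 :=
        Complex.ofReal_ne_zero.mpr (hS0pos lam hTl).ne'
      have hβ0 : β = 0 := by
        have h' := ha
        rw [hc0, mul_zero, zero_mul] at h'
        exact (mul_eq_zero.mp h'.symm).resolve_right hS0c
      have hy0 : y = 0 := by
        funext l
        have := hyl l
        rw [hc0, hβ0] at this
        simpa using this
      apply hxne
      have h10 : x = Bᴴ *ᵥ y := by
        rw [hy, Matrix.mulVec_mulVec, hBHB, Matrix.one_mulVec]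
      rw [h10, hy0]
      funext l
      simp [Matrix.mulVec_zero]
    refine ⟨hTl, ?_, c, β, hcne, hyf, ha⟩
    -- secular equation
    set S0 : ℝ := ∑ l, p l / (lam - T l) with hS0
    set S1 : ℝ := ∑ l, T l * p l / (lam - T l) with hS1
    set S2 : ℝ := ∑ l, T l^2 * p l / (lam - T l) with hS2
    have hcomplex : c * (((S0:ℂ)) - (ϑ:ℂ)*(S0:ℂ)*(S2:ℂ) + (ϑ:ℂ)*(S1:ℂ)^2) = 0 := by
      linear_combination ((S0:ℂ)) * hb + ((S1:ℂ)) * ha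
    have hrealc : ((S0 - ϑ*(S0*S2) + ϑ*S1^2 : ℝ) : ℂ) = 0 := by
      have h11 := (mul_eq_zero.mp hcomplex).resolve_left hcne
      push_cast
      linear_combination h11
    have hreal : S0 - ϑ*(S0*S2) + ϑ*S1^2 = 0 := Complex.ofReal_eq_zero.mp hrealc
    have id1 : lam * S0 - S1 = 1 := by
      rw [hS0, hS1, Finset.mul_sum, ← Finset.sum_sub_distrib, ← hpsum]
      refine Finset.sum_congr rfl fun l _ => ?_
      field_simp [(hposl l).ne']
    have id2 : lam * S1 - S2 = am := by
      rw [hS1, hS2, Finset.mul_sum, ← Finset.sum_sub_distrib, hamp]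
      refine Finset.sum_congr rfl fun l _ => ?_
      field_simp [(hposl l).ne']
    have h9 : ϑ*(S0*(lam - am)) - S0 - ϑ = 0 := by
      linear_combination (ϑ*(1 - S1))*id1 + (ϑ*S0)*id2 - hreal
    have hϑne : ϑ ≠ 0 := hϑ.ne'
    have hfinal : S0 * (lam - am - 1/ϑ) * ϑ = ϑ*(S0*(lam - am)) - S0 := by
      field_simp
    have h10 : S0 * (lam - am - 1/ϑ) * ϑ = 1 * ϑ := by
      rw [one_mul, hfinal]; linarith [h9]
    exact mul_right_cancel₀ hϑne h10
  -- positivity of region for eigenvalues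
  have hregion : ∀ i : Fin k, T1 < hEh.eigenvalues i → am + 1/ϑ < hEh.eigenvalues i := by
    intro i hgt
    obtain ⟨hTl, hsec, -⟩ := main i hgt
    have hS0p := hS0pos _ hTl
    nlinarith [hsec, hS0p]
  constructor
  · -- at most one eigenvalue above T1
    rw [Finset.card_le_one]
    intro a ha b hb
    simp only [Finset.mem_filter] at ha hb
    by_contra hab
    obtain ⟨hTla, hseca, ca, βa, hca, hyfa, haa⟩ := main a ha.2
    obtain ⟨hTlb, hsecb, cb, βb, hcb, hyfb, hbb⟩ := main b hb.2
    have heq : hEh.eigenvalues b = hEh.eigenvalues a :=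
      unique_sol p T hp0 hpsum am ϑ hϑ hamp _ _ hTlb hTla hsecb hseca
    rw [heq] at hyfb hbb
    have hS0c : ((∑ l, p l / (hEh.eigenvalues a - T l) : ℝ):ℂ) ≠ 0 :=
      Complex.ofReal_ne_zero.mpr (hS0pos _ hTla).ne'
    have h10 : ca * βb = cb * βa := by
      have h11 : (ca * βb - cb * βa) * ((∑ l, p l / (hEh.eigenvalues a - T l) : ℝ):ℂ) = 0 := by
        linear_combination cb * haa - ca * hbb
      have h12 := (mul_eq_zero.mp h11).resolve_right hS0c
      linear_combination h12
    have hyab : ∀ l, cb * (B *ᵥ ⇑(hEh.eigenvectorBasis a)) l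
        = ca * (B *ᵥ ⇑(hEh.eigenvectorBasis b)) l := by
      intro l
      have hne' : ((hEh.eigenvalues a : ℂ) - (T l : ℂ)) ≠ 0 := by
        rw [← Complex.ofReal_sub]
        exact Complex.ofReal_ne_zero.mpr (sub_pos.2 (hTla l)).ne'
      have h13 : ((hEh.eigenvalues a : ℂ) - (T l : ℂ)) *
          (cb * (B *ᵥ ⇑(hEh.eigenvectorBasis a)) l
            - ca * (B *ᵥ ⇑(hEh.eigenvectorBasis b)) l) = 0 := by
        linear_combination cb * hyfa l - ca * hyfb l + A₁ l * h10
      have h14 := (mul_eq_zero.mp h13).resolve_left hne'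
      linear_combination h14
    have hxab : ∀ jj, cb * (⇑(hEh.eigenvectorBasis a) : Fin k → ℂ) jj
        = ca * (⇑(hEh.eigenvectorBasis b) : Fin k → ℂ) jj := by
      intro jj
      have hca' : (⇑(hEh.eigenvectorBasis a) : Fin k → ℂ)
          = Bᴴ *ᵥ (B *ᵥ ⇑(hEh.eigenvectorBasis a)) := by
        rw [Matrix.mulVec_mulVec, hBHB, Matrix.one_mulVec]
      have hcb' : (⇑(hEh.eigenvectorBasis b) : Fin k → ℂ)
          = Bᴴ *ᵥ (B *ᵥ ⇑(hEh.eigenvectorBasis b)) := by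
        rw [Matrix.mulVec_mulVec, hBHB, Matrix.one_mulVec]
      rw [hca', hcb']
      rw [show (Bᴴ *ᵥ (B *ᵥ ⇑(hEh.eigenvectorBasis a))) jj
        = ∑ l, Bᴴ jj l * (B *ᵥ ⇑(hEh.eigenvectorBasis a)) l from rfl]
      rw [show (Bᴴ *ᵥ (B *ᵥ ⇑(hEh.eigenvectorBasis b))) jj
        = ∑ l, Bᴴ jj l * (B *ᵥ ⇑(hEh.eigenvectorBasis b)) l from rfl]
      rw [Finset.mul_sum, Finset.mul_sum]
      refine Finset.sum_congr rfl fun l _ => ?_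
      linear_combination (Bᴴ jj l) * hyab l
    have hinner : ∀ s t : Fin k, (inner ℂ (hEh.eigenvectorBasis s) (hEh.eigenvectorBasis t) : ℂ)
        = ∑ jj, (starRingEnd ℂ) ((⇑(hEh.eigenvectorBasis s) : Fin k → ℂ) jj)
            * (⇑(hEh.eigenvectorBasis t) : Fin k → ℂ) jj := by
      intro s t
      rw [PiLp.inner_apply]
      exact Finset.sum_congr rfl fun jj _ => by rw [RCLike.inner_apply']
    have hON := orthonormal_iff_ite.mp hEh.eigenvectorBasis.orthonormal
    have hab0 : ∑ jj, (starRingEnd ℂ) ((⇑(hEh.eigenvectorBasis a) : Fin k → ℂ) jj)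
        * (⇑(hEh.eigenvectorBasis b) : Fin k → ℂ) jj = 0 := by
      rw [← hinner a b]
      rw [hON a b, if_neg hab]
    have haa1 : ∑ jj, (starRingEnd ℂ) ((⇑(hEh.eigenvectorBasis a) : Fin k → ℂ) jj)
        * (⇑(hEh.eigenvectorBasis a) : Fin k → ℂ) jj = 1 := by
      rw [← hinner a a]
      rw [hON a a, if_pos rfl]
    have hfin : cb = 0 := by
      have h15 : cb * (∑ jj, (starRingEnd ℂ) ((⇑(hEh.eigenvectorBasis a) : Fin k → ℂ) jj)
            * (⇑(hEh.eigenvectorBasis a) : Fin k → ℂ) jj)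
          = ca * (∑ jj, (starRingEnd ℂ) ((⇑(hEh.eigenvectorBasis a) : Fin k → ℂ) jj)
            * (⇑(hEh.eigenvectorBasis b) : Fin k → ℂ) jj) := by
        rw [Finset.mul_sum, Finset.mul_sum]
        refine Finset.sum_congr rfl fun jj _ => ?_
        linear_combination (starRingEnd ℂ) ((⇑(hEh.eigenvectorBasis a) : Fin k → ℂ) jj) * hxab jj
      rw [haa1, hab0] at h15
      simpa using h15
    exact hcb hfin
  · -- characterization
    intro i hgt
    obtain ⟨hTl, hsec, -⟩ := main i hgt
    have hreg := hregion i hgt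
    have hXpos : 0 < hEh.eigenvalues i - am - 1/ϑ := by linarith
    refine ⟨max_lt_iff.mpr ⟨hreg, hgt⟩, ?_, ?_⟩
    · rw [hQm, eq_div_iff hXpos.ne']
      exact hsec
    · intro lam hmax hQ
      have hlam1 : am + 1/ϑ < lam := lt_of_le_of_lt (le_max_left _ _) hmax
      have hlam2 : T1 < lam := lt_of_le_of_lt (le_max_right _ _) hmax
      have hTll : ∀ l, T l < lam := fun l => lt_of_le_of_lt (hTle l) hlam2
      have hXpos' : 0 < lam - am - 1/ϑ := by linarith
      have h1 : (∑ l, p l / (lam - T l)) * (lam - am - 1/ϑ) = 1 := by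
        rw [hQm] at hQ
        rw [hQ, one_div, inv_mul_cancel₀ hXpos'.ne']
      exact unique_sol p T hp0 hpsum am ϑ hϑ hamp lam _ hTll hTl h1 hsec

end
end
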